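/- arXiv:1902.03409 — 8 statements merged into one kernel-verified Lean document; each statement's English description precedes it below -/
import Mathlib

section
/- Let V be a real normed vector space, let K be a natural number, let u, u_0, ..., u_K, e_0, ..., e_K be elements of V with u_{-1} := 0, and let C_X > 0, C_Y > 0 and positive reals \eta_{X_K}, \eta_{Y_0}, ..., \eta_{Y_K} be given. Assume \|u - u_K\| \le C_X \eta_{X_K}, assume \|(u_k - u_{k-1}) - e_k\| \le C_Y \eta_{Y_{K-k}} for every k = 0, ..., K, and assume \eta_{Y_k} \le C_X \eta_{X_K} / ((K+1) C_Y) for every k = 0, ..., K. Then the multilevel approximation u^{ML} := \sum_{k=0}^K e_k satisfies \|u - u^{ML}\| \le 2 C_X \eta_{X_K}. -/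
open Finset

lemma telescope_aux {V : Type*} [AddCommGroup V] (uu : ℕ → V) (K : ℕ) :
    ∑ k ∈ range (K + 1), (uu k - if k = 0 then 0 else uu (k - 1)) = uu K := by
  induction K with
  | zero => simp
  | succ n ih =>
      rw [Finset.sum_range_succ, ih]
      simp

/-- Convergence of the multilevel approximation under the spatial error bound,
the stochastic interpolation error bound, and the simple choice of tolerances
`η_{Y_k} ≤ C_X η_{X_K} / ((K+1) C_Y)`. -/
theorem multilevel_convergence_simple_tolerances
    (V : Type*) [NormedAddCommGroup V] [NormedSpace ℝ V]
    (K : ℕ) (u : V) (uu e : ℕ → V)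
    (CX CY ηXK : ℝ) (ηY : ℕ → ℝ)
    (hCX : 0 < CX) (hCY : 0 < CY) (hηXK : 0 < ηXK)
    (hηYpos : ∀ k ≤ K, 0 < ηY k)
    (hspace : ‖u - uu K‖ ≤ CX * ηXK)
    (hstoch : ∀ k ≤ K,
      ‖(uu k - if k = 0 then 0 else uu (k - 1)) - e k‖ ≤ CY * ηY (K - k))
    (htol : ∀ k ≤ K, ηY k ≤ CX * ηXK / ((K + 1 : ℝ) * CY)) :
    ‖u - ∑ k ∈ range (K + 1), e k‖ ≤ 2 * CX * ηXK := by
  have key : u - ∑ k ∈ range (K + 1), e k =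
      (u - uu K) + ∑ k ∈ range (K + 1),
        ((uu k - if k = 0 then 0 else uu (k - 1)) - e k) := by
    rw [Finset.sum_sub_distrib, telescope_aux]
    abel
  have hb : ∀ k ∈ range (K + 1),
      ‖(uu k - if k = 0 then 0 else uu (k - 1)) - e k‖ ≤
        CY * (CX * ηXK / ((K + 1 : ℝ) * CY)) := by
    intro k hk
    rw [Finset.mem_range, Nat.lt_succ_iff] at hk
    refine (hstoch k hk).trans ?_
    exact mul_le_mul_of_nonneg_left (htol (K - k) (Nat.sub_le _ _)) hCY.le
  have hsum : ‖∑ k ∈ range (K + 1),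
      ((uu k - if k = 0 then 0 else uu (k - 1)) - e k)‖ ≤
      (K + 1 : ℝ) * (CY * (CX * ηXK / ((K + 1 : ℝ) * CY))) := by
    calc _ ≤ ∑ k ∈ range (K + 1),
          ‖(uu k - if k = 0 then 0 else uu (k - 1)) - e k‖ := norm_sum_le _ _
      _ ≤ ∑ _k ∈ range (K + 1), CY * (CX * ηXK / ((K + 1 : ℝ) * CY)) :=
          Finset.sum_le_sum hb
      _ = (K + 1 : ℝ) * (CY * (CX * ηXK / ((K + 1 : ℝ) * CY))) := by
          rw [Finset.sum_const, Finset.card_range]; push_cast; ring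
  have heq : (K + 1 : ℝ) * (CY * (CX * ηXK / ((K + 1 : ℝ) * CY))) = CX * ηXK := by
    have h1 : (K + 1 : ℝ) ≠ 0 := by positivity
    field_simp
  calc ‖u - ∑ k ∈ range (K + 1), e k‖
      ≤ ‖u - uu K‖ + ‖∑ k ∈ range (K + 1),
          ((uu k - if k = 0 then 0 else uu (k - 1)) - e k)‖ := by
        rw [key]; exact norm_add_le _ _
    _ ≤ CX * ηXK + CX * ηXK := add_le_add hspace (hsum.trans_eq heq)
    _ = 2 * CX * ηXK := by ring
end

section
/- Let K be a natural number, let \eta_{-1}, \eta_0, \eta_1, ..., \eta_K be positive reals, let s > 0, \mu > 0, C_I > 0 and \varepsilon > 0, and define F_k := (\eta_k^{-s} + \eta_{k-1}^{-s}) \eta_{k-1}^{-1} and G_K := \sum_{k=0}^{K} F_k^{\mu/(\mu+1)} \eta_{k-1}. Then for every choice of positive real numbers M_0, M_1, ..., M_K satisfying the constraint \sum_{k=0}^{K} C_I M_{K-k}^{-\mu} \eta_{k-1} \le \varepsilon / 2, the cost satisfies \sum_{k=0}^{K} M_{K-k} (\eta_k^{-s} + \eta_{k-1}^{-s}) \ge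 (2 C_I)^{1/\mu} G_K^{(\mu+1)/\mu} \varepsilon^{-1/\mu}. -/
/-!
Write `c_k = η_k^{-s} + η_{k-1}^{-s}`, so that `C = ∑ M_{K-k} c_k` is the cost and
`S = ∑ M_{K-k}^{-μ} η_{k-1} ≤ ε / (2 C_I)` by the budget. Each term of `G` factors as
`(M c_k)^{μ/(μ+1)} (M^{-μ} η_{k-1})^{1/(μ+1)}`, the powers of `M` cancelling, so Hölder's
inequality with exponents `(μ+1)/μ` and `μ+1` gives `G ≤ C^{μ/(μ+1)} S^{1/(μ+1)}`; raising this
to the power `(μ+1)/μ` yields `C ≥ G^{(μ+1)/μ} S^{-1/μ} ≥ G^{(μ+1)/μ} (2 C_I / ε)^{1/μ}`.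
-/

open Finset

namespace Real

lemma div_rpow_mul_self {c w : ℝ} (t : ℝ) (hc : 0 ≤ c) (hw : 0 < w) :
    (c / w) ^ t * w = c ^ t * w ^ (1 - t) := by
  rw [div_rpow hc hw.le, rpow_sub hw, rpow_one]
  field_simp

lemma mul_rpow_mul_rpow_neg_mul_rpow {a c w μ : ℝ} (hμ : 0 < μ) (ha : 0 < a) (hc : 0 ≤ c)
    (hw : 0 ≤ w) :
    (a * c) ^ (μ / (μ + 1)) * (a ^ (-μ) * w) ^ (1 / (μ + 1)) =
      c ^ (μ / (μ + 1)) * w ^ (1 / (μ + 1)) := by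
  have ha_cancel : a ^ (μ / (μ + 1)) * (a ^ (-μ)) ^ (1 / (μ + 1)) = 1 := by
    rw [← rpow_mul ha.le, ← rpow_add ha]
    convert rpow_zero a using 2
    field_simp
    ring
  rw [mul_rpow ha.le hc, mul_rpow (rpow_nonneg ha.le _) hw]
  linear_combination c ^ (μ / (μ + 1)) * w ^ (1 / (μ + 1)) * ha_cancel

end Real

open Real

section CostConstraint

variable {ι : Type*} (s : Finset ι) {a c w : ι → ℝ} {μ : ℝ}

lemma sum_rpow_mul_rpow_le_cost_mul_constraint (hμ : 0 < μ) (ha : ∀ i ∈ s, 0 < a i)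
    (hc : ∀ i ∈ s, 0 ≤ c i) (hw : ∀ i ∈ s, 0 ≤ w i) :
    ∑ i ∈ s, c i ^ (μ / (μ + 1)) * w i ^ (1 / (μ + 1)) ≤
      (∑ i ∈ s, a i * c i) ^ (μ / (μ + 1)) * (∑ i ∈ s, a i ^ (-μ) * w i) ^ (1 / (μ + 1)) := by
  have hpq : ((μ + 1) / μ).HolderConjugate (μ + 1) :=
    holderConjugate_iff.mpr ⟨by rw [lt_div_iff₀ hμ]; linarith, by field_simp⟩
  have holder := inner_le_Lp_mul_Lq_of_nonneg s hpq
    (f := fun i ↦ (a i * c i) ^ ((μ + 1) / μ)⁻¹) (g := fun i ↦ (a i ^ (-μ) * w i) ^ (μ + 1)⁻¹)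
    (fun i hi ↦ rpow_nonneg (mul_nonneg (ha i hi).le (hc i hi)) _)
    (fun i hi ↦ rpow_nonneg (mul_nonneg (rpow_nonneg (ha i hi).le _) (hw i hi)) _)
  have hcost : ∑ i ∈ s, ((a i * c i) ^ ((μ + 1) / μ)⁻¹) ^ ((μ + 1) / μ) = ∑ i ∈ s, a i * c i :=
    sum_congr rfl fun i hi ↦ rpow_inv_rpow (mul_nonneg (ha i hi).le (hc i hi)) (by positivity)
  have hconstraint : ∑ i ∈ s, ((a i ^ (-μ) * w i) ^ (μ + 1)⁻¹) ^ (μ + 1) =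
      ∑ i ∈ s, a i ^ (-μ) * w i :=
    sum_congr rfl fun i hi ↦
      rpow_inv_rpow (mul_nonneg (rpow_nonneg (ha i hi).le _) (hw i hi)) (by positivity)
  rw [hcost, hconstraint, one_div_div, inv_div, ← one_div] at holder
  calc _ = ∑ i ∈ s, (a i * c i) ^ (μ / (μ + 1)) * (a i ^ (-μ) * w i) ^ (1 / (μ + 1)) :=
        sum_congr rfl fun i hi ↦
          (mul_rpow_mul_rpow_neg_mul_rpow hμ (ha i hi) (hc i hi) (hw i hi)).symm
    _ ≤ _ := holder

lemma rpow_mul_rpow_neg_le_cost_of_constraint_le (hμ : 0 < μ) (ha : ∀ i ∈ s, 0 < a i)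
    (hc : ∀ i ∈ s, 0 ≤ c i) (hw : ∀ i ∈ s, 0 ≤ w i) {B : ℝ} (hB : 0 < B)
    (hconstraint : ∑ i ∈ s, a i ^ (-μ) * w i ≤ B) :
    (∑ i ∈ s, c i ^ (μ / (μ + 1)) * w i ^ (1 / (μ + 1))) ^ ((μ + 1) / μ) * B ^ (-(1 / μ)) ≤
      ∑ i ∈ s, a i * c i := by
  set G := ∑ i ∈ s, c i ^ (μ / (μ + 1)) * w i ^ (1 / (μ + 1))
  set C := ∑ i ∈ s, a i * c i
  have hG : 0 ≤ G := sum_nonneg fun i hi ↦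
    mul_nonneg (rpow_nonneg (hc i hi) _) (rpow_nonneg (hw i hi) _)
  have hC : 0 ≤ C := sum_nonneg fun i hi ↦ mul_nonneg (ha i hi).le (hc i hi)
  have hS : 0 ≤ ∑ i ∈ s, a i ^ (-μ) * w i := sum_nonneg fun i hi ↦
    mul_nonneg (rpow_nonneg (ha i hi).le _) (hw i hi)
  have holder : G ≤ C ^ (μ / (μ + 1)) * B ^ (1 / (μ + 1)) :=
    (sum_rpow_mul_rpow_le_cost_mul_constraint s hμ ha hc hw).trans (by gcongr)
  calc G ^ ((μ + 1) / μ) * B ^ (-(1 / μ))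
      ≤ (C ^ (μ / (μ + 1)) * B ^ (1 / (μ + 1))) ^ ((μ + 1) / μ) * B ^ (-(1 / μ)) := by
        gcongr
    _ = C := by
        rw [mul_rpow (by positivity) (by positivity), ← rpow_mul hC, ← rpow_mul hB.le,
          mul_assoc, ← rpow_add hB]
        convert mul_one C using 2
        · rw [div_mul_div_cancel₀ (by positivity), div_self hμ.ne', rpow_one]
        · convert rpow_zero B using 2
          field_simp
          ring

end CostConstraint

theorem optimal_cost_lower_bound_general
    (K : ℕ) (η : ℤ → ℝ) (s μ CI ε : ℝ)
    (hη : ∀ k : ℤ, -1 ≤ k → k ≤ K → 0 < η k)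
    (hμ : 0 < μ) (hCI : 0 < CI) (hε : 0 < ε)
    (F : ℕ → ℝ)
    (hF : ∀ k : ℕ,
      F k = (η (k : ℤ) ^ (-s) + η ((k : ℤ) - 1) ^ (-s)) * (η ((k : ℤ) - 1))⁻¹)
    (G : ℝ)
    (hG : G = ∑ k ∈ range (K + 1), F k ^ (μ / (μ + 1)) * η ((k : ℤ) - 1))
    (M : ℕ → ℝ) (hM : ∀ k ≤ K, 0 < M k)
    (hconstraint :
      ∑ k ∈ range (K + 1), CI * M (K - k) ^ (-μ) * η ((k : ℤ) - 1) ≤ ε / 2) :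
    (2 * CI) ^ (1 / μ) * G ^ ((μ + 1) / μ) * ε ^ (-(1 / μ)) ≤
      ∑ k ∈ range (K + 1),
        M (K - k) * (η (k : ℤ) ^ (-s) + η ((k : ℤ) - 1) ^ (-s)) := by
  have hη_pos : ∀ k ∈ range (K + 1), 0 < η k ∧ 0 < η (k - 1) := fun k hk ↦ by
    rw [mem_range] at hk
    exact ⟨hη _ (by omega) (by omega), hη _ (by omega) (by omega)⟩
  have hc : ∀ k ∈ range (K + 1), 0 ≤ η k ^ (-s) + η (k - 1) ^ (-s) := fun k hk ↦
    add_nonneg (rpow_nonneg (hη_pos k hk).1.le _) (rpow_nonneg (hη_pos k hk).2.le _)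
  have hG' : G = ∑ k ∈ range (K + 1), (η k ^ (-s) + η (k - 1) ^ (-s)) ^ (μ / (μ + 1)) *
      η (k - 1) ^ (1 / (μ + 1)) := by
    refine hG.trans (sum_congr rfl fun k hk ↦ ?_)
    rw [hF, ← div_eq_mul_inv, div_rpow_mul_self _ (hc k hk) (hη_pos k hk).2]
    congr 2
    field_simp
    ring
  have hbudget : ∑ k ∈ range (K + 1), M (K - k) ^ (-μ) * η (k - 1) ≤ ε / (2 * CI) := by
    rw [le_div_iff₀ (by positivity)]
    simp only [mul_assoc, ← mul_sum] at hconstraint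
    linarith
  have hcost := rpow_mul_rpow_neg_le_cost_of_constraint_le _ hμ
    (fun k _ ↦ hM _ (Nat.sub_le K k)) hc (fun k hk ↦ (hη_pos k hk).2.le) (by positivity) hbudget
  refine le_of_eq_of_le ?_ (hG' ▸ hcost)
  rw [div_rpow hε.le (by positivity), rpow_neg hε.le, rpow_neg (by positivity), div_inv_eq_mul]
  ring

/-- Optimality of the Lagrange sample numbers: any positive real sample numbers
satisfying the stochastic error budget constraint incur at least the optimal cost. -/
theorem optimal_cost_lower_bound
    (K : ℕ) (η : ℤ → ℝ) (s μ CI ε : ℝ)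
    (hη : ∀ k : ℤ, -1 ≤ k → k ≤ K → 0 < η k)
    (hs : 0 < s) (hμ : 0 < μ) (hCI : 0 < CI) (hε : 0 < ε)
    (F : ℕ → ℝ)
    (hF : ∀ k : ℕ,
      F k = (η (k : ℤ) ^ (-s) + η ((k : ℤ) - 1) ^ (-s)) * (η ((k : ℤ) - 1))⁻¹)
    (G : ℝ)
    (hG : G = ∑ k ∈ range (K + 1), F k ^ (μ / (μ + 1)) * η ((k : ℤ) - 1))
    (M : ℕ → ℝ) (hM : ∀ k ≤ K, 0 < M k)
    (hconstraint :
      ∑ k ∈ range (K + 1), CI * M (K - k) ^ (-μ) * η ((k : ℤ) - 1) ≤ ε / 2) :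
    (2 * CI) ^ (1 / μ) * G ^ ((μ + 1) / μ) * ε ^ (-(1 / μ)) ≤
      ∑ k ∈ range (K + 1),
        M (K - k) * (η (k : ℤ) ^ (-s) + η ((k : ℤ) - 1) ^ (-s)) :=
  optimal_cost_lower_bound_general K η s μ CI ε hη hμ hCI hε F hF G hG M hM hconstraint
end

section
/- Let K be a natural number, let \eta_{-1}, \eta_0, \eta_1, ..., \eta_K be positive reals, let s > 0, \mu > 0, C_I > 0 and \varepsilon > 0, and define F_k := (\eta_k^{-s} + \eta_{k-1}^{-s}) \eta_{k-1}^{-1}, G_K := \sum_{k=0}^{K} F_k^{\mu/(\mu+1)} \eta_{k-1}, and M_{K-k}^* := (2 C_I G_K)^{1/\mu} F_k^{-1/(\mu+1)} \varepsilon^{-1/\mu}. Then the rounded-up sample numbers satisfy \sum_{k=0}^{K} \lceil M_{K-k}^* \rceil (\eta_k^{-s} + \eta_{k-1}^{-s}) \le (2 C_I)^{1/\mu} G_K^{(\mu+1)/\mu} \varepsilon^{-1/\mu} + \sum_{k=0}^{K} F_k \eta_{k-1}, and moreover \sum_{k=0}^{K} C_I \lceil M_{K-k}^* \rceil^{-\mu}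 \eta_{k-1} \le \varepsilon / 2. -/
/-!
Rounding up adds at most one sample per level, so the cost exceeds the cost of the continuous
Lagrange optimum by at most `∑ₖ Fₖ ηₖ₋₁`, while `M ↦ M ^ (-μ)` is antitone, so the error budget,
which the optimum meets with equality, is still met. At the optimum `Mₖ = c Fₖ ^ (-1/(μ+1))`
both sums collapse onto `G = ∑ₖ Fₖ ^ (μ/(μ+1)) ηₖ₋₁`.
-/

open Finset

theorem Finset.sum_natCeil_mul_le {ι : Type*} (S : Finset ι) {x a : ι → ℝ}
    (hx : ∀ i ∈ S, 0 ≤ x i) (ha : ∀ i ∈ S, 0 ≤ a i) :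
    ∑ i ∈ S, (⌈x i⌉₊ : ℝ) * a i ≤ ∑ i ∈ S, x i * a i + ∑ i ∈ S, a i := by
  rw [← sum_add_distrib]
  refine sum_le_sum fun i hi => ?_
  calc (⌈x i⌉₊ : ℝ) * a i ≤ (x i + 1) * a i :=
        mul_le_mul_of_nonneg_right (Nat.ceil_lt_add_one (hx i hi)).le (ha i hi)
    _ = x i * a i + a i := by ring

theorem Real.natCeil_rpow_neg_le {x μ : ℝ} (hx : 0 < x) (hμ : 0 ≤ μ) :
    (⌈x⌉₊ : ℝ) ^ (-μ) ≤ x ^ (-μ) :=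
  Real.rpow_le_rpow_of_nonpos hx (Nat.le_ceil x) (neg_nonpos.mpr hμ)

section LagrangeOptimum

variable {c x μ : ℝ}

theorem mul_rpow_neg_inv_add_one_mul_self (hx : x ≠ 0) (hμ : μ + 1 ≠ 0) :
    c * x ^ (-(1 / (μ + 1))) * x = c * x ^ (μ / (μ + 1)) := by
  rw [mul_assoc, ← Real.rpow_add_one hx]
  congr 2
  field_simp
  ring

theorem mul_rpow_neg_inv_add_one_rpow_neg (hc : 0 ≤ c) (hx : 0 ≤ x) (hμ : μ + 1 ≠ 0) :
    (c * x ^ (-(1 / (μ + 1)))) ^ (-μ) = c ^ (-μ) * x ^ (μ / (μ + 1)) := by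
  rw [Real.mul_rpow hc (by positivity), ← Real.rpow_mul hx]
  congr 2
  field_simp

variable {ι : Type*} (S : Finset ι) {w M F : ι → ℝ} (CI : ℝ)

theorem sum_natCeil_optimal_samples_cost_le (hc : 0 ≤ c) (hμ : μ + 1 ≠ 0)
    (hF : ∀ i ∈ S, 0 < F i) (hw : ∀ i ∈ S, 0 ≤ w i)
    (hM : ∀ i ∈ S, M i = c * F i ^ (-(1 / (μ + 1)))) :
    ∑ i ∈ S, (⌈M i⌉₊ : ℝ) * (F i * w i) ≤
      c * ∑ i ∈ S, F i ^ (μ / (μ + 1)) * w i + ∑ i ∈ S, F i * w i := by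
  have hcost : ∑ i ∈ S, M i * (F i * w i) = c * ∑ i ∈ S, F i ^ (μ / (μ + 1)) * w i := by
    rw [mul_sum]
    refine sum_congr rfl fun i hi => ?_
    rw [← mul_assoc, hM i hi, mul_rpow_neg_inv_add_one_mul_self (hF i hi).ne' hμ, mul_assoc]
  rw [← hcost]
  refine sum_natCeil_mul_le S (fun i hi => ?_) (fun i hi => mul_nonneg (hF i hi).le (hw i hi))
  have := hF i hi
  rw [hM i hi]
  positivity

theorem sum_natCeil_optimal_samples_budget_le (hCI : 0 ≤ CI) (hc : 0 < c) (hμ : 0 < μ)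
    (hF : ∀ i ∈ S, 0 < F i) (hw : ∀ i ∈ S, 0 ≤ w i)
    (hM : ∀ i ∈ S, M i = c * F i ^ (-(1 / (μ + 1)))) :
    ∑ i ∈ S, CI * (⌈M i⌉₊ : ℝ) ^ (-μ) * w i ≤
      CI * c ^ (-μ) * ∑ i ∈ S, F i ^ (μ / (μ + 1)) * w i := by
  rw [mul_sum]
  refine sum_le_sum fun i hi => ?_
  have hFi := hF i hi
  have hMi : 0 < M i := by rw [hM i hi]; positivity
  calc CI * (⌈M i⌉₊ : ℝ) ^ (-μ) * w i ≤ CI * M i ^ (-μ) * w i := by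
        refine mul_le_mul_of_nonneg_right ?_ (hw i hi)
        exact mul_le_mul_of_nonneg_left (Real.natCeil_rpow_neg_le hMi hμ.le) hCI
    _ = CI * c ^ (-μ) * (F i ^ (μ / (μ + 1)) * w i) := by
        rw [hM i hi, mul_rpow_neg_inv_add_one_rpow_neg hc.le hFi.le (by positivity)]
        ring

end LagrangeOptimum

section OptimalConstant

variable {CI G ε μ : ℝ}

theorem optimal_constant_mul (hCI : 0 ≤ CI) (hG : 0 < G) (hμ : 0 < μ) :
    (2 * CI * G) ^ (1 / μ) * ε ^ (-(1 / μ)) * G =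
      (2 * CI) ^ (1 / μ) * G ^ ((μ + 1) / μ) * ε ^ (-(1 / μ)) := by
  have hGpow : G ^ (1 / μ) * G = G ^ ((μ + 1) / μ) := by
    rw [← Real.rpow_add_one hG.ne']
    congr 1
    field_simp
    ring
  rw [Real.mul_rpow (by positivity) hG.le, ← hGpow]
  ring

theorem optimal_constant_rpow_neg (hCI : 0 < CI) (hG : 0 < G) (hε : 0 < ε) (hμ : 0 < μ) :
    CI * ((2 * CI * G) ^ (1 / μ) * ε ^ (-(1 / μ))) ^ (-μ) * G = ε / 2 := by
  have hμ0 : μ ≠ 0 := hμ.ne'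
  rw [Real.mul_rpow (by positivity) (by positivity), ← Real.rpow_mul (by positivity),
    ← Real.rpow_mul hε.le, show 1 / μ * -μ = -1 by field_simp,
    show -(1 / μ) * -μ = 1 by field_simp, Real.rpow_neg_one, Real.rpow_one]
  field_simp

end OptimalConstant

theorem rounded_samples_cost_and_budget_general
    (K : ℕ) (η : ℤ → ℝ) (s μ CI ε : ℝ)
    (hη : ∀ k : ℤ, -1 ≤ k → k ≤ K → 0 < η k)
    (hμ : 0 < μ) (hCI : 0 < CI) (hε : 0 < ε)
    (F : ℕ → ℝ)
    (hF : ∀ k : ℕ,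
      F k = (η (k : ℤ) ^ (-s) + η ((k : ℤ) - 1) ^ (-s)) * (η ((k : ℤ) - 1))⁻¹)
    (G : ℝ)
    (hG : G = ∑ k ∈ range (K + 1), F k ^ (μ / (μ + 1)) * η ((k : ℤ) - 1))
    (M : ℕ → ℝ)
    (hM : ∀ k : ℕ,
      M k = (2 * CI * G) ^ (1 / μ) * F k ^ (-(1 / (μ + 1))) * ε ^ (-(1 / μ))) :
    (∑ k ∈ range (K + 1),
        (⌈M k⌉₊ : ℝ) * (η (k : ℤ) ^ (-s) + η ((k : ℤ) - 1) ^ (-s)) ≤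
      (2 * CI) ^ (1 / μ) * G ^ ((μ + 1) / μ) * ε ^ (-(1 / μ)) +
        ∑ k ∈ range (K + 1), F k * η ((k : ℤ) - 1)) ∧
    ∑ k ∈ range (K + 1), CI * (⌈M k⌉₊ : ℝ) ^ (-μ) * η ((k : ℤ) - 1) ≤ ε / 2 := by
  have hη' : ∀ k ∈ range (K + 1), 0 < η (k : ℤ) ∧ 0 < η ((k : ℤ) - 1) := by
    intro k hk
    rw [mem_range] at hk
    exact ⟨hη _ (by omega) (by omega), hη _ (by omega) (by omega)⟩
  have hFpos : ∀ k ∈ range (K + 1), 0 < F k := fun k hk => by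
    obtain ⟨h₀, h₁⟩ := hη' k hk
    rw [hF]
    positivity
  have hGpos : 0 < G := hG ▸ sum_pos (fun k hk => by
    have := hFpos k hk; have := (hη' k hk).2; positivity) nonempty_range_add_one
  have hlevel : ∀ k ∈ range (K + 1),
      η (k : ℤ) ^ (-s) + η ((k : ℤ) - 1) ^ (-s) = F k * η ((k : ℤ) - 1) := fun k hk => by
    rw [hF, inv_mul_cancel_right₀ (hη' k hk).2.ne']
  have hw : ∀ k ∈ range (K + 1), 0 ≤ η ((k : ℤ) - 1) := fun k hk => (hη' k hk).2.le
  have hMc : ∀ k ∈ range (K + 1),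
      M k = (2 * CI * G) ^ (1 / μ) * ε ^ (-(1 / μ)) * F k ^ (-(1 / (μ + 1))) :=
    fun k _ => by rw [hM]; ring
  have hc : 0 < (2 * CI * G) ^ (1 / μ) * ε ^ (-(1 / μ)) := by positivity
  refine ⟨?_, ?_⟩
  · rw [sum_congr rfl fun k hk => by rw [hlevel k hk]]
    refine (sum_natCeil_optimal_samples_cost_le _ hc.le (by positivity) hFpos hw hMc).trans_eq ?_
    rw [← hG, optimal_constant_mul hCI.le hGpos hμ]
  · refine (sum_natCeil_optimal_samples_budget_le _ _ hCI.le hc hμ hFpos hw hMc).trans_eq ?_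
    rw [← hG, optimal_constant_rpow_neg hCI hGpos hε hμ]

/-- The rounded-up optimal sample numbers yield the ε-cost estimate and still
satisfy the stochastic error budget. -/
theorem rounded_samples_cost_and_budget
    (K : ℕ) (η : ℤ → ℝ) (s μ CI ε : ℝ)
    (hη : ∀ k : ℤ, -1 ≤ k → k ≤ K → 0 < η k)
    (hs : 0 < s) (hμ : 0 < μ) (hCI : 0 < CI) (hε : 0 < ε)
    (F : ℕ → ℝ)
    (hF : ∀ k : ℕ,
      F k = (η (k : ℤ) ^ (-s) + η ((k : ℤ) - 1) ^ (-s)) * (η ((k : ℤ) - 1))⁻¹)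
    (G : ℝ)
    (hG : G = ∑ k ∈ range (K + 1), F k ^ (μ / (μ + 1)) * η ((k : ℤ) - 1))
    (M : ℕ → ℝ)
    (hM : ∀ k : ℕ,
      M k = (2 * CI * G) ^ (1 / μ) * F k ^ (-(1 / (μ + 1))) * ε ^ (-(1 / μ))) :
    (∑ k ∈ range (K + 1),
        (⌈M k⌉₊ : ℝ) * (η (k : ℤ) ^ (-s) + η ((k : ℤ) - 1) ^ (-s)) ≤
      (2 * CI) ^ (1 / μ) * G ^ ((μ + 1) / μ) * ε ^ (-(1 / μ)) +
        ∑ k ∈ range (K + 1), F k * η ((k : ℤ) - 1)) ∧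
    ∑ k ∈ range (K + 1), CI * (⌈M k⌉₊ : ℝ) ^ (-μ) * η ((k : ℤ) - 1) ≤ ε / 2 :=
  rounded_samples_cost_and_budget_general K η s μ CI ε hη hμ hCI hε F hF G hG M hM
end

section
/- (Theorem 1, abstract form.) Let V be a real normed vector space, K a natural number, and u, u_0, ..., u_K \in V with u_{-1} := 0. Let \eta_{-1}, \eta_0, ..., \eta_K be positive reals, s > 0, \mu > 0, C_A > 0, C_I > 0 and \varepsilon > 0. For each k = 0, ..., K and each positive integer M, let v_{k,M} \in V satisfy \|(u_k - u_{k-1}) - v_{k,M}\| \le C_I M^{-\mu} \eta_{k-1}. Assume \|u - u_K\| \le \varepsilon/2. Define F_k := (\eta_k^{-s} + \eta_{k-1}^{-s}) \eta_{k-1}^{-1}, G_K := \sum_{k=0}^{K} F_k^{\mu/(\mu+1)} \eta_{k-1}, and set M_{K-k} := \lceil (2 C_I G_K)^{1/\mu} F_k^{-1/(\mu+1)} \varepsilon^{-1/\mu} \rceil. Then the multilevel approximation u^{ML} := \sum_{k=0}^{K} v_{k, M_{K-k}} satisfies \|u - u^{ML}\| \le \varepsilon, and its cost satisfies \sum_{k=0}^{K}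 M_{K-k} \, C_A (\eta_k^{-s} + \eta_{k-1}^{-s}) \le C_A (2 C_I)^{1/\mu} G_K^{(\mu+1)/\mu} \varepsilon^{-1/\mu} + C_A \sum_{k=0}^{K} F_k \eta_{k-1}. -/
/-!
With `x_k := (2 C_I G)^{1/μ} F_k^{-1/(μ+1)} ε^{-1/μ}` one has
`C_I x_k^{-μ} η_{k-1} = ε/(2G) · F_k^{μ/(μ+1)} η_{k-1}` and
`x_k F_k η_{k-1} = (2 C_I)^{1/μ} G^{1/μ} ε^{-1/μ} · F_k^{μ/(μ+1)} η_{k-1}`,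
so summing over the levels, both bounds reduce to the definition of `G`. Rounding `x_k` up to
`M_k` only decreases the interpolation errors and adds at most one sample, of cost
`C_A F_k η_{k-1}`, per level. The spatial error is controlled because the level differences
telescope to `u_K`.
-/

open Finset

theorem sum_range_succ_sub_prev {V : Type*} [AddCommGroup V] (w : ℕ → V) (n : ℕ) :
    ∑ k ∈ range (n + 1), (w k - if k = 0 then 0 else w (k - 1)) = w n := by
  induction n with
  | zero => simp
  | succ n ih => rw [sum_range_succ, ih]; simp

theorem norm_sub_sum_le_of_sum_eq {ι V : Type*} [SeminormedAddCommGroup V] (t : Finset ι)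
    {u w : V} {d : ι → V} (hd : ∑ i ∈ t, d i = w) (v : ι → V) :
    ‖u - ∑ i ∈ t, v i‖ ≤ ‖u - w‖ + ∑ i ∈ t, ‖d i - v i‖ :=
  calc ‖u - ∑ i ∈ t, v i‖ = ‖(u - w) + ∑ i ∈ t, (d i - v i)‖ := by
        rw [sum_sub_distrib, hd]; abel_nf
    _ ≤ ‖u - w‖ + ∑ i ∈ t, ‖d i - v i‖ :=
        (norm_add_le _ _).trans (by gcongr; exact norm_sum_le _ _)

namespace Real

theorem rpow_one_div_mul_self {G μ : ℝ} (hG : 0 < G) (hμ : μ ≠ 0) :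
    G ^ (1 / μ) * G = G ^ ((μ + 1) / μ) := by
  rw [← rpow_add_one hG.ne']
  congr 1
  field_simp
  ring

end Real

section SingleLevel

open Real

variable {μ a b c : ℝ}

theorem optimal_samples_rpow_neg (hμ : 0 < μ) (ha : 0 < a) (hb : 0 < b) (hc : 0 < c) :
    (a ^ (1 / μ) * b ^ (-(1 / (μ + 1))) * c ^ (-(1 / μ))) ^ (-μ) =
      a⁻¹ * b ^ (μ / (μ + 1)) * c := by
  have hμ1 : μ + 1 ≠ 0 := by linarith
  rw [mul_rpow (by positivity) (by positivity), mul_rpow (by positivity) (by positivity),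
    ← rpow_mul ha.le, ← rpow_mul hb.le, ← rpow_mul hc.le]
  have e1 : 1 / μ * -μ = -1 := by field_simp
  have e2 : -(1 / (μ + 1)) * -μ = μ / (μ + 1) := by field_simp
  have e3 : -(1 / μ) * -μ = 1 := by field_simp
  rw [e1, e2, e3, rpow_neg_one, rpow_one]

theorem optimal_samples_mul_self (hμ : 0 < μ) (hb : 0 < b) :
    a ^ (1 / μ) * b ^ (-(1 / (μ + 1))) * c ^ (-(1 / μ)) * b =
      a ^ (1 / μ) * c ^ (-(1 / μ)) * b ^ (μ / (μ + 1)) := by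
  have hμ1 : μ + 1 ≠ 0 := by linarith
  have hb' : b ^ (-(1 / (μ + 1))) * b = b ^ (μ / (μ + 1)) := by
    rw [← rpow_add_one hb.ne']
    congr 1
    field_simp
    ring
  rw [← hb']
  ring

variable {CI CA G ε f e : ℝ} {N : ℕ}

theorem level_error_le (hμ : 0 < μ) (hCI : 0 < CI) (hG : 0 < G) (hε : 0 < ε) (hf : 0 < f)
    (he : 0 ≤ e)
    (hN : (2 * CI * G) ^ (1 / μ) * f ^ (-(1 / (μ + 1))) * ε ^ (-(1 / μ)) ≤ N) :
    CI * (N : ℝ) ^ (-μ) * e ≤ ε / (2 * G) * (f ^ (μ / (μ + 1)) * e) := by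
  have hx : 0 < (2 * CI * G) ^ (1 / μ) * f ^ (-(1 / (μ + 1))) * ε ^ (-(1 / μ)) := by positivity
  calc CI * (N : ℝ) ^ (-μ) * e
      ≤ CI * ((2 * CI * G) ^ (1 / μ) * f ^ (-(1 / (μ + 1))) * ε ^ (-(1 / μ))) ^ (-μ) * e := by
        have := rpow_le_rpow_of_nonpos hx hN (by linarith : -μ ≤ 0)
        gcongr
    _ = ε / (2 * G) * (f ^ (μ / (μ + 1)) * e) := by
        rw [optimal_samples_rpow_neg hμ (by positivity) hf hε]
        field_simp

theorem level_cost_le (hμ : 0 < μ) (hCA : 0 ≤ CA) (hCI : 0 ≤ CI) (hG : 0 ≤ G) (hε : 0 ≤ ε)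
    (hf : 0 < f) (he : 0 ≤ e)
    (hN : N = ⌈(2 * CI * G) ^ (1 / μ) * f ^ (-(1 / (μ + 1))) * ε ^ (-(1 / μ))⌉₊) :
    (N : ℝ) * (CA * (f * e)) ≤
      CA * (2 * CI) ^ (1 / μ) * G ^ (1 / μ) * ε ^ (-(1 / μ)) * (f ^ (μ / (μ + 1)) * e) +
        CA * (f * e) := by
  set x := (2 * CI * G) ^ (1 / μ) * f ^ (-(1 / (μ + 1))) * ε ^ (-(1 / μ))
  have hNx : (N : ℝ) ≤ x + 1 := hN ▸ (Nat.ceil_lt_add_one (by positivity)).le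
  calc (N : ℝ) * (CA * (f * e)) ≤ (x + 1) * (CA * (f * e)) := by gcongr
    _ = CA * (x * f * e) + CA * (f * e) := by ring
    _ = _ := by
        rw [optimal_samples_mul_self hμ hf, mul_rpow (by positivity) hG]
        ring

end SingleLevel

section Levels

variable {ι : Type*} (t : Finset ι) {μ CI CA G ε : ℝ} {f e : ι → ℝ} {N : ι → ℕ}

theorem sum_level_error_le (hμ : 0 < μ) (hCI : 0 < CI) (hG : 0 < G) (hε : 0 < ε)
    (hf : ∀ i ∈ t, 0 < f i) (he : ∀ i ∈ t, 0 ≤ e i)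
    (hGdef : G = ∑ i ∈ t, f i ^ (μ / (μ + 1)) * e i)
    (hN : ∀ i ∈ t, (2 * CI * G) ^ (1 / μ) * f i ^ (-(1 / (μ + 1))) * ε ^ (-(1 / μ)) ≤ N i) :
    ∑ i ∈ t, CI * (N i : ℝ) ^ (-μ) * e i ≤ ε / 2 :=
  calc ∑ i ∈ t, CI * (N i : ℝ) ^ (-μ) * e i
      ≤ ∑ i ∈ t, ε / (2 * G) * (f i ^ (μ / (μ + 1)) * e i) :=
        sum_le_sum fun i hi => level_error_le hμ hCI hG hε (hf i hi) (he i hi) (hN i hi)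
    _ = ε / 2 := by rw [← mul_sum, ← hGdef]; field_simp

theorem sum_level_cost_le (hμ : 0 < μ) (hCA : 0 ≤ CA) (hCI : 0 ≤ CI) (hG : 0 < G) (hε : 0 ≤ ε)
    (hf : ∀ i ∈ t, 0 < f i) (he : ∀ i ∈ t, 0 ≤ e i)
    (hGdef : G = ∑ i ∈ t, f i ^ (μ / (μ + 1)) * e i)
    (hN : ∀ i ∈ t, N i = ⌈(2 * CI * G) ^ (1 / μ) * f i ^ (-(1 / (μ + 1))) * ε ^ (-(1 / μ))⌉₊) :
    ∑ i ∈ t, (N i : ℝ) * (CA * (f i * e i)) ≤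
      CA * (2 * CI) ^ (1 / μ) * G ^ ((μ + 1) / μ) * ε ^ (-(1 / μ)) +
        CA * ∑ i ∈ t, f i * e i :=
  calc ∑ i ∈ t, (N i : ℝ) * (CA * (f i * e i))
      ≤ ∑ i ∈ t, (CA * (2 * CI) ^ (1 / μ) * G ^ (1 / μ) * ε ^ (-(1 / μ)) *
          (f i ^ (μ / (μ + 1)) * e i) + CA * (f i * e i)) :=
        sum_le_sum fun i hi =>
          level_cost_le hμ hCA hCI hG.le hε (hf i hi) (he i hi) (hN i hi)
    _ = _ := by
        rw [sum_add_distrib, ← mul_sum, ← mul_sum, ← hGdef, mul_assoc _ (G ^ (1 / μ)),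
          ← Real.rpow_one_div_mul_self hG hμ.ne']
        ring

end Levels

theorem multilevel_accuracy_and_cost_general
    (V : Type*) [NormedAddCommGroup V] [NormedSpace ℝ V]
    (K : ℕ) (u : V) (uu : ℕ → V) (η : ℤ → ℝ)
    (s μ CA CI ε : ℝ)
    (hη : ∀ k : ℤ, -1 ≤ k → k ≤ K → 0 < η k)
    (hμ : 0 < μ) (hCA : 0 < CA) (hCI : 0 < CI) (hε : 0 < ε)
    (v : ℕ → ℕ → V)
    (hv : ∀ k ≤ K, ∀ M : ℕ, 0 < M →
      ‖(uu k - if k = 0 then 0 else uu (k - 1)) - v k M‖ ≤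
        CI * (M : ℝ) ^ (-μ) * η ((k : ℤ) - 1))
    (hspace : ‖u - uu K‖ ≤ ε / 2)
    (F : ℕ → ℝ)
    (hF : ∀ k : ℕ,
      F k = (η (k : ℤ) ^ (-s) + η ((k : ℤ) - 1) ^ (-s)) * (η ((k : ℤ) - 1))⁻¹)
    (G : ℝ)
    (hG : G = ∑ k ∈ range (K + 1), F k ^ (μ / (μ + 1)) * η ((k : ℤ) - 1))
    (M : ℕ → ℕ)
    (hM : ∀ k : ℕ,
      M k = ⌈(2 * CI * G) ^ (1 / μ) * F k ^ (-(1 / (μ + 1))) * ε ^ (-(1 / μ))⌉₊) :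
    ‖u - ∑ k ∈ range (K + 1), v k (M k)‖ ≤ ε ∧
      ∑ k ∈ range (K + 1),
          (M k : ℝ) * (CA * (η (k : ℤ) ^ (-s) + η ((k : ℤ) - 1) ^ (-s))) ≤
        CA * (2 * CI) ^ (1 / μ) * G ^ ((μ + 1) / μ) * ε ^ (-(1 / μ)) +
          CA * ∑ k ∈ range (K + 1), F k * η ((k : ℤ) - 1) := by
  have hηk : ∀ k ∈ range (K + 1), 0 < η k := fun k hk =>
    hη _ (by omega) (by have := mem_range_succ_iff.mp hk; omega)
  have hηk1 : ∀ k ∈ range (K + 1), 0 < η ((k : ℤ) - 1) := fun k hk =>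
    hη _ (by omega) (by have := mem_range_succ_iff.mp hk; omega)
  have hFpos : ∀ k ∈ range (K + 1), 0 < F k := fun k hk => by
    have := hηk k hk; have := hηk1 k hk
    rw [hF k]; positivity
  have hGpos : 0 < G := hG ▸ sum_pos (fun k hk => by
    have := hηk1 k hk; have := hFpos k hk
    positivity) nonempty_range_add_one
  have hMpos : ∀ k ∈ range (K + 1), 0 < M k := fun k hk => by
    have := hFpos k hk
    rw [hM k, Nat.ceil_pos]; positivity
  constructor
  · calc ‖u - ∑ k ∈ range (K + 1), v k (M k)‖
        ≤ ε / 2 + ∑ k ∈ range (K + 1), CI * (M k : ℝ) ^ (-μ) * η ((k : ℤ) - 1) :=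
          (norm_sub_sum_le_of_sum_eq _ (sum_range_succ_sub_prev uu K) _).trans <|
            add_le_add hspace <| sum_le_sum fun k hk =>
              hv k (mem_range_succ_iff.mp hk) _ (hMpos k hk)
      _ ≤ ε / 2 + ε / 2 := add_le_add_right (sum_level_error_le _ hμ hCI hGpos hε hFpos
          (fun k hk => (hηk1 k hk).le) hG fun k _ => hM k ▸ Nat.le_ceil _) _
      _ = ε := add_halves ε
  · have hW : ∀ k ∈ range (K + 1),
        η (k : ℤ) ^ (-s) + η ((k : ℤ) - 1) ^ (-s) = F k * η ((k : ℤ) - 1) := fun k hk => by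
      rw [hF k, inv_mul_cancel_right₀ (hηk1 k hk).ne']
    rw [sum_congr rfl fun k hk => by rw [hW k hk]]
    exact sum_level_cost_le _ hμ hCA.le hCI.le hGpos hε.le hFpos (fun k hk => (hηk1 k hk).le) hG
      fun k _ => hM k

/-- Theorem 1 (abstract form): accuracy and ε-cost of the adaptive multilevel
stochastic collocation approximation with rounded-up optimal sample numbers. -/
theorem multilevel_accuracy_and_cost
    (V : Type*) [NormedAddCommGroup V] [NormedSpace ℝ V]
    (K : ℕ) (u : V) (uu : ℕ → V) (η : ℤ → ℝ)
    (s μ CA CI ε : ℝ)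
    (hη : ∀ k : ℤ, -1 ≤ k → k ≤ K → 0 < η k)
    (hs : 0 < s) (hμ : 0 < μ) (hCA : 0 < CA) (hCI : 0 < CI) (hε : 0 < ε)
    (v : ℕ → ℕ → V)
    (hv : ∀ k ≤ K, ∀ M : ℕ, 0 < M →
      ‖(uu k - if k = 0 then 0 else uu (k - 1)) - v k M‖ ≤
        CI * (M : ℝ) ^ (-μ) * η ((k : ℤ) - 1))
    (hspace : ‖u - uu K‖ ≤ ε / 2)
    (F : ℕ → ℝ)
    (hF : ∀ k : ℕ,
      F k = (η (k : ℤ) ^ (-s) + η ((k : ℤ) - 1) ^ (-s)) * (η ((k : ℤ) - 1))⁻¹)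
    (G : ℝ)
    (hG : G = ∑ k ∈ range (K + 1), F k ^ (μ / (μ + 1)) * η ((k : ℤ) - 1))
    (M : ℕ → ℕ)
    (hM : ∀ k : ℕ,
      M k = ⌈(2 * CI * G) ^ (1 / μ) * F k ^ (-(1 / (μ + 1))) * ε ^ (-(1 / μ))⌉₊) :
    ‖u - ∑ k ∈ range (K + 1), v k (M k)‖ ≤ ε ∧
      ∑ k ∈ range (K + 1),
          (M k : ℝ) * (CA * (η (k : ℤ) ^ (-s) + η ((k : ℤ) - 1) ^ (-s))) ≤
        CA * (2 * CI) ^ (1 / μ) * G ^ ((μ + 1) / μ) * ε ^ (-(1 / μ)) +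
          CA * ∑ k ∈ range (K + 1), F k * η ((k : ℤ) - 1) :=
  multilevel_accuracy_and_cost_general V K u uu η s μ CA CI ε hη hμ hCA hCI hε v hv hspace F hF G hG
    M hM
end

section
/- (Theorem 2, case s\mu < 1.) Let q \in (0,1), let \eta_0 > 0 and \eta_{-1} > 0, and set \eta_k := q^k \eta_0 for k \ge 1. Let s > 0, \mu > 0 with s\mu < 1, and let C_I > 0, C_X > 0. For \varepsilon \in (0,1) let K(\varepsilon) be the least natural number K with 2 C_X q^K \eta_0 \le \varepsilon, and define F_k := (\eta_k^{-s} + \eta_{k-1}^{-s}) \eta_{k-1}^{-1} and G_K := \sum_{k=0}^{K} F_k^{\mu/(\mu+1)} \eta_{k-1}. Then there exists a constant C > 0, independent of \varepsilon, such that for all \varepsilon \in (0,1): (2 C_I)^{1/\mu} G_{K(\varepsilon)}^{(\mu+1)/\mu} \varepsilon^{-1/\mu} + \sum_{k=0}^{K(\varepsilon)} F_k \eta_{k-1} \le C \varepsilon^{-1/\mu}. -/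
open Finset Real

/-!
For `k ≥ 1` the tolerances are `η_{k-1} = q^{k-1} η₀`, and `F_k ≤ 2 q^{-s} η_{k-1}^{-s-1}`.
Hence the terms of `G` are `O(η_{k-1}^δ)` with `δ = 1 - (s+1)μ/(μ+1) = (1 - sμ)/(μ+1) > 0`:
`G_K` is bounded by a convergent geometric series, uniformly in `K`. The work terms
`F_k η_{k-1}` are `O(q^{-sk})` and sum to `O(q^{-sK})`. Minimality of `K(ε)` gives
`q^{K(ε)} ≥ c ε`, so the work is `O(ε^{-s})`, which is `O(ε^{-1/μ})` since `sμ < 1` and `ε < 1`.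
-/

lemma pow_mul_rpow {q x : ℝ} (hq : 0 ≤ q) (hx : 0 ≤ x) (j : ℕ) (t : ℝ) :
    (q ^ j * x) ^ t = (q ^ t) ^ j * x ^ t := by
  rw [mul_rpow (pow_nonneg hq j) hx, rpow_pow_comm hq]

lemma geom_sum_le_of_one_lt {r : ℝ} (hr : 1 < r) (n : ℕ) :
    ∑ i ∈ range n, r ^ i ≤ r ^ n / (r - 1) := by
  rw [geom_sum_eq hr.ne']
  gcongr
  linarith

-- The denominator `max 1 a` rather than `a` keeps the bound valid when `K = 0`, where nothing
-- forces `a > 0`.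
lemma le_pow_of_isLeast {a q ε : ℝ} {K : ℕ} (hq0 : 0 < q) (hq1 : q ≤ 1) (hε : 0 < ε)
    (hε1 : ε ≤ 1) (hK : IsLeast {K : ℕ | a * q ^ K ≤ ε} K) :
    q / max 1 a * ε ≤ q ^ K := by
  have hc : q / max 1 a ≤ q := div_le_self hq0.le (le_max_left 1 a)
  rcases K with _ | n
  · simpa using mul_le_one₀ (hc.trans hq1) hε.le hε1
  · have hn : ε < a * q ^ n := not_le.mp fun h => by simpa using hK.2 h
    have ha : 0 < a := pos_of_mul_pos_left (hε.trans hn) (by positivity)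
    calc q / max 1 a * ε ≤ q / a * ε := by gcongr; exact le_max_right 1 a
      _ ≤ q / a * (a * q ^ n) := by gcongr
      _ = q ^ (n + 1) := by field_simp; ring

lemma pow_rpow_neg_le_of_isLeast {a q s t ε : ℝ} {K : ℕ} (hq0 : 0 < q) (hq1 : q ≤ 1)
    (hs : 0 ≤ s) (hst : s ≤ t) (hε : 0 < ε) (hε1 : ε ≤ 1)
    (hK : IsLeast {K : ℕ | a * q ^ K ≤ ε} K) :
    (q ^ (-s)) ^ K ≤ (q / max 1 a) ^ (-s) * ε ^ (-t) := by
  have hc : 0 < q / max 1 a := div_pos hq0 (lt_max_of_lt_left one_pos)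
  calc (q ^ (-s)) ^ K = (q ^ K) ^ (-s) := rpow_pow_comm hq0.le _ _
    _ ≤ (q / max 1 a * ε) ^ (-s) :=
        rpow_le_rpow_of_nonpos (by positivity) (le_pow_of_isLeast hq0 hq1 hε hε1 hK)
          (by linarith)
    _ = (q / max 1 a) ^ (-s) * ε ^ (-s) := mul_rpow hc.le hε.le
    _ ≤ (q / max 1 a) ^ (-s) * ε ^ (-t) := mul_le_mul_of_nonneg_left
        (rpow_le_rpow_of_exponent_ge hε hε1 (neg_le_neg hst)) (by positivity)

lemma sum_range_succ_mul_sub_one {q η0 : ℝ} {η : ℤ → ℝ} (hη : ∀ k : ℕ, η k = q ^ k * η0)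
    (g : ℕ → ℝ) (K : ℕ) :
    ∑ k ∈ range (K + 1), g k * η ((k : ℤ) - 1) =
      ∑ j ∈ range K, g (j + 1) * (q ^ j * η0) + g 0 * η (-1) := by
  rw [sum_range_succ']
  congr 1
  refine sum_congr rfl fun j _ => ?_
  rw [← hη]
  push_cast
  ring_nf

section Level

variable {q x s : ℝ}

lemma rpow_neg_add_rpow_neg_le (hq0 : 0 < q) (hq1 : q ≤ 1) (hx : 0 < x) (hs : 0 ≤ s) :
    (q * x) ^ (-s) + x ^ (-s) ≤ 2 * q ^ (-s) * x ^ (-s) := by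
  have h : x ^ (-s) ≤ (q * x) ^ (-s) :=
    rpow_le_rpow_of_nonpos (by positivity) (by nlinarith) (by linarith)
  rw [mul_rpow hq0.le hx.le] at h ⊢
  linarith

lemma level_work_le (hq0 : 0 < q) (hq1 : q ≤ 1) (hx : 0 < x) (hs : 0 ≤ s) :
    ((q * x) ^ (-s) + x ^ (-s)) * x⁻¹ * x ≤ 2 * q ^ (-s) * x ^ (-s) := by
  rw [inv_mul_cancel_right₀ hx.ne']
  exact rpow_neg_add_rpow_neg_le hq0 hq1 hx hs

lemma level_sample_le (hq0 : 0 < q) (hq1 : q ≤ 1) (hx : 0 < x) (hs : 0 ≤ s) {θ : ℝ}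
    (hθ : 0 ≤ θ) :
    (((q * x) ^ (-s) + x ^ (-s)) * x⁻¹) ^ θ * x ≤
      (2 * q ^ (-s)) ^ θ * x ^ (1 - (s + 1) * θ) := by
  have hpow : x ^ (1 - (s + 1) * θ) = (x ^ (-s) * x⁻¹) ^ θ * x := by
    rw [← rpow_neg_one, ← rpow_add hx, ← rpow_mul hx.le]
    nth_rewrite 3 [← rpow_one x]
    rw [← rpow_add hx]
    ring_nf
  calc (((q * x) ^ (-s) + x ^ (-s)) * x⁻¹) ^ θ * x
      ≤ (2 * q ^ (-s) * x ^ (-s) * x⁻¹) ^ θ * x := by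
        gcongr
        exact rpow_neg_add_rpow_neg_le hq0 hq1 hx hs
    _ = (2 * q ^ (-s)) ^ θ * x ^ (1 - (s + 1) * θ) := by
        rw [hpow, mul_assoc (2 * q ^ (-s)), mul_rpow (by positivity) (by positivity)]
        ring

end Level

section GeometricLevels

variable {q η0 s : ℝ} {F : ℕ → ℝ}

lemma sum_work_le (hq0 : 0 < q) (hq1 : q < 1) (hη0 : 0 < η0) (hs : 0 < s)
    (hF : ∀ j : ℕ, F (j + 1) = ((q * (q ^ j * η0)) ^ (-s) + (q ^ j * η0) ^ (-s)) * (q ^ j * η0)⁻¹)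
    (K : ℕ) :
    ∑ j ∈ range K, F (j + 1) * (q ^ j * η0) ≤
      2 * q ^ (-s) * η0 ^ (-s) / (q ^ (-s) - 1) * (q ^ (-s)) ^ K := by
  have hr : 1 < q ^ (-s) := one_lt_rpow_of_pos_of_lt_one_of_neg hq0 hq1 (by linarith)
  calc ∑ j ∈ range K, F (j + 1) * (q ^ j * η0)
      ≤ ∑ j ∈ range K, 2 * q ^ (-s) * η0 ^ (-s) * (q ^ (-s)) ^ j := by
        refine sum_le_sum fun j _ => ?_
        rw [hF]
        refine (level_work_le hq0 hq1.le (by positivity) hs.le).trans_eq ?_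
        rw [pow_mul_rpow hq0.le hη0.le]
        ring
    _ = 2 * q ^ (-s) * η0 ^ (-s) * ∑ j ∈ range K, (q ^ (-s)) ^ j := by rw [mul_sum]
    _ ≤ 2 * q ^ (-s) * η0 ^ (-s) * ((q ^ (-s)) ^ K / (q ^ (-s) - 1)) := by
        gcongr
        exact geom_sum_le_of_one_lt hr K
    _ = 2 * q ^ (-s) * η0 ^ (-s) / (q ^ (-s) - 1) * (q ^ (-s)) ^ K := by ring

lemma sum_sample_le (hq0 : 0 < q) (hq1 : q < 1) (hη0 : 0 < η0) (hs : 0 ≤ s)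
    (hF : ∀ j : ℕ, F (j + 1) = ((q * (q ^ j * η0)) ^ (-s) + (q ^ j * η0) ^ (-s)) * (q ^ j * η0)⁻¹)
    {θ : ℝ} (hθ : 0 ≤ θ) (hsθ : (s + 1) * θ < 1) (K : ℕ) :
    ∑ j ∈ range K, F (j + 1) ^ θ * (q ^ j * η0) ≤
      (2 * q ^ (-s)) ^ θ * η0 ^ (1 - (s + 1) * θ) / (1 - q ^ (1 - (s + 1) * θ)) := by
  set δ := 1 - (s + 1) * θ
  have hρ1 : q ^ δ < 1 := rpow_lt_one hq0.le hq1 (by simp only [δ]; linarith)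
  calc ∑ j ∈ range K, F (j + 1) ^ θ * (q ^ j * η0)
      ≤ ∑ j ∈ range K, (2 * q ^ (-s)) ^ θ * η0 ^ δ * (q ^ δ) ^ j := by
        refine sum_le_sum fun j _ => ?_
        rw [hF]
        refine (level_sample_le hq0 hq1.le (by positivity) hs hθ).trans_eq ?_
        rw [pow_mul_rpow hq0.le hη0.le]
        ring
    _ = (2 * q ^ (-s)) ^ θ * η0 ^ δ * ∑ j ∈ range K, (q ^ δ) ^ j := by rw [mul_sum]
    _ ≤ (2 * q ^ (-s)) ^ θ * η0 ^ δ * ((q ^ δ) ^ 0 / (1 - q ^ δ)) := by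
        gcongr
        rw [range_eq_Ico]
        exact geom_sum_Ico_le_of_lt_one (by positivity) hρ1
    _ = (2 * q ^ (-s)) ^ θ * η0 ^ δ / (1 - q ^ δ) := by ring

end GeometricLevels

theorem epsilon_cost_case_8_general
    (q η0 ηm s μ CI CX : ℝ)
    (hq0 : 0 < q) (hq1 : q < 1) (hη0 : 0 < η0) (hηm : 0 < ηm)
    (hs : 0 < s) (hμ : 0 < μ) (hsμ : s * μ < 1)
    (η : ℤ → ℝ)
    (hηneg : η (-1) = ηm)
    (hηnat : ∀ k : ℕ, η (k : ℤ) = q ^ k * η0)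
    (Kf : ℝ → ℕ)
    (hKf : ∀ ε : ℝ, 0 < ε → ε < 1 →
      IsLeast {K : ℕ | 2 * CX * q ^ K * η0 ≤ ε} (Kf ε))
    (F : ℕ → ℝ)
    (hF : ∀ k : ℕ,
      F k = (η (k : ℤ) ^ (-s) + η ((k : ℤ) - 1) ^ (-s)) * (η ((k : ℤ) - 1))⁻¹)
    (G : ℕ → ℝ)
    (hG : ∀ K : ℕ,
      G K = ∑ k ∈ range (K + 1), F k ^ (μ / (μ + 1)) * η ((k : ℤ) - 1)) :
    ∃ C : ℝ, 0 < C ∧ ∀ ε : ℝ, 0 < ε → ε < 1 →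
      (2 * CI) ^ (1 / μ) * G (Kf ε) ^ ((μ + 1) / μ) * ε ^ (-(1 / μ)) +
          ∑ k ∈ range (Kf ε + 1), F k * η ((k : ℤ) - 1) ≤
        C * ε ^ (-(1 / μ)) := by
  have hFsucc (j : ℕ) :
      F (j + 1) = ((q * (q ^ j * η0)) ^ (-s) + (q ^ j * η0) ^ (-s)) * (q ^ j * η0)⁻¹ := by
    rw [hF, show ((j + 1 : ℕ) : ℤ) - 1 = j by push_cast; ring, hηnat, hηnat, pow_succ', mul_assoc]
  have hF0 : 0 < F 0 := by rw [hF, hηnat, Nat.cast_zero, zero_sub, hηneg]; positivity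
  set θ := μ / (μ + 1)
  have hsθ : (s + 1) * θ < 1 := by
    rw [← mul_div_assoc, div_lt_one (by positivity)]; linarith
  have hGK (K : ℕ) : G K = ∑ j ∈ range K, F (j + 1) ^ θ * (q ^ j * η0) + F 0 ^ θ * ηm := by
    rw [hG, sum_range_succ_mul_sub_one hηnat, hηneg]
  set Gb := (2 * q ^ (-s)) ^ θ * η0 ^ (1 - (s + 1) * θ) / (1 - q ^ (1 - (s + 1) * θ)) +
    F 0 ^ θ * ηm
  have hG_le (K : ℕ) : G K ≤ Gb := by
    rw [hGK]
    exact add_le_add_left (sum_sample_le hq0 hq1 hη0 hs.le hFsucc (by positivity) hsθ K) _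
  have hG_nonneg (K : ℕ) : 0 ≤ G K := by
    rw [hGK]; simp only [hFsucc]; positivity
  have hGb : 0 ≤ Gb := (hG_nonneg 0).trans (hG_le 0)
  set W := 2 * q ^ (-s) * η0 ^ (-s) / (q ^ (-s) - 1)
  have hW : 0 ≤ W := by simpa using sum_work_le hq0 hq1 hη0 hs hFsucc 0
  set c := q / max 1 (2 * CX * η0)
  set a := (2 * CI) ^ (1 / μ)
  refine ⟨|a| * Gb ^ ((μ + 1) / μ) + W * c ^ (-s) + F 0 * ηm, by positivity,
    fun ε hε hε1 => ?_⟩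
  have hsample : a * G (Kf ε) ^ ((μ + 1) / μ) ≤ |a| * Gb ^ ((μ + 1) / μ) := by
    have := hG_nonneg (Kf ε)
    gcongr
    exacts [le_abs_self a, hG_le _]
  have hwork : ∑ j ∈ range (Kf ε), F (j + 1) * (q ^ j * η0) ≤ W * (c ^ (-s) * ε ^ (-(1 / μ))) :=
    (sum_work_le hq0 hq1 hη0 hs hFsucc _).trans <| mul_le_mul_of_nonneg_left
      (pow_rpow_neg_le_of_isLeast hq0 hq1.le hs.le
        (by rw [le_div_iff₀ hμ]; linarith) hε hε1.le
        (by simpa only [mul_right_comm _ η0] using hKf ε hε hε1)) hW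
  rw [sum_range_succ_mul_sub_one hηnat, hηneg]
  calc a * G (Kf ε) ^ ((μ + 1) / μ) * ε ^ (-(1 / μ)) +
        (∑ j ∈ range (Kf ε), F (j + 1) * (q ^ j * η0) + F 0 * ηm)
      ≤ |a| * Gb ^ ((μ + 1) / μ) * ε ^ (-(1 / μ)) +
        (W * (c ^ (-s) * ε ^ (-(1 / μ))) + F 0 * ηm * ε ^ (-(1 / μ))) :=
        add_le_add (mul_le_mul_of_nonneg_right hsample (by positivity))
          (add_le_add hwork (le_mul_of_one_le_right (by positivity)
            (one_le_rpow_of_pos_of_le_one_of_nonpos hε hε1.le (by simp [hμ.le]))))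
    _ = (|a| * Gb ^ ((μ + 1) / μ) + W * c ^ (-s) + F 0 * ηm) * ε ^ (-(1 / μ)) := by ring

/-- Theorem 2, case sμ < 1: ε-cost bound of the multilevel stochastic collocation
method with geometric spatial tolerances. -/
theorem epsilon_cost_case_8
    (q η0 ηm s μ CI CX : ℝ)
    (hq0 : 0 < q) (hq1 : q < 1) (hη0 : 0 < η0) (hηm : 0 < ηm)
    (hs : 0 < s) (hμ : 0 < μ) (hsμ : s * μ < 1)
    (hCI : 0 < CI) (hCX : 0 < CX)
    (η : ℤ → ℝ)
    (hηneg : η (-1) = ηm)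
    (hηnat : ∀ k : ℕ, η (k : ℤ) = q ^ k * η0)
    (Kf : ℝ → ℕ)
    (hKf : ∀ ε : ℝ, 0 < ε → ε < 1 →
      IsLeast {K : ℕ | 2 * CX * q ^ K * η0 ≤ ε} (Kf ε))
    (F : ℕ → ℝ)
    (hF : ∀ k : ℕ,
      F k = (η (k : ℤ) ^ (-s) + η ((k : ℤ) - 1) ^ (-s)) * (η ((k : ℤ) - 1))⁻¹)
    (G : ℕ → ℝ)
    (hG : ∀ K : ℕ,
      G K = ∑ k ∈ range (K + 1), F k ^ (μ / (μ + 1)) * η ((k : ℤ) - 1)) :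
    ∃ C : ℝ, 0 < C ∧ ∀ ε : ℝ, 0 < ε → ε < 1 →
      (2 * CI) ^ (1 / μ) * G (Kf ε) ^ ((μ + 1) / μ) * ε ^ (-(1 / μ)) +
          ∑ k ∈ range (Kf ε + 1), F k * η ((k : ℤ) - 1) ≤
        C * ε ^ (-(1 / μ)) :=
  epsilon_cost_case_8_general q η0 ηm s μ CI CX hq0 hq1 hη0 hηm hs hμ hsμ η hηneg hηnat Kf hKf F hF
    G hG
end

section
/- (Theorem 2, case s\mu = 1.) Let q \in (0,1), let \eta_0 > 0 and \eta_{-1} > 0, and set \eta_k := q^k \eta_0 for k \ge 1. Let s > 0, \mu > 0 with s\mu = 1, and let C_I > 0, C_X > 0. For \varepsilon \in (0,1) let K(\varepsilon) be the least natural number K with 2 C_X q^K \eta_0 \le \varepsilon, and define F_k := (\eta_k^{-s} + \eta_{k-1}^{-s}) \eta_{k-1}^{-1} and G_K := \sum_{k=0}^{K} F_k^{\mu/(\mu+1)} \eta_{k-1}. Then there exists a constant C > 0, independent of \varepsilon, such that for all \varepsilon \in (0,1): (2 C_I)^{1/\mu} G_{K(\varepsilon)}^{(\mu+1)/\mu}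 \varepsilon^{-1/\mu} + \sum_{k=0}^{K(\varepsilon)} F_k \eta_{k-1} \le C \varepsilon^{-1/\mu} (1 + |\log \varepsilon|)^{1 + 1/\mu}. -/
/-!
Put `μ = 1/s`, so that `μ/(μ+1) = 1/(1+s)`. Then
`F_k^{1/(1+s)} η_{k-1} = ((η_{k-1}/η_k)^s + 1)^{1/(1+s)}`, and since consecutive tolerances have
bounded ratio every summand of `G_K` is bounded, whence `G_K^{1+s} ≲ (K+1)^{1+s}`. The summands
`F_k η_{k-1} = η_k^{-s} + η_{k-1}^{-s}` of the second sum are `≲ η_K^{-s}`. Minimality of `K(ε)`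
gives `q^{K(ε)} ≳ ε`, hence `η_{K(ε)}^{-s} ≲ ε^{-s}` and `K(ε) + 1 ≲ 1 + |log ε|`.
-/

open Finset Real

/-- `F_k(s)` of the paper, for the tolerances `η k = η_{X_k}`. -/
noncomputable def levelFactor (s : ℝ) (η : ℤ → ℝ) (k : ℕ) : ℝ :=
  (η k ^ (-s) + η (k - 1) ^ (-s)) * (η (k - 1))⁻¹

section LevelFactor

variable {s : ℝ} {η : ℤ → ℝ}

lemma levelFactor_mul_self {k : ℕ} (hk : η (k - 1) ≠ 0) :
    levelFactor s η k * η (k - 1) = η k ^ (-s) + η (k - 1) ^ (-s) := by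
  rw [levelFactor, mul_assoc, inv_mul_cancel₀ hk, mul_one]

lemma levelFactor_rpow_mul_self {k : ℕ} (hk : 0 < η k) (hk' : 0 < η (k - 1)) (hs : 1 + s ≠ 0) :
    levelFactor s η k ^ (1 + s)⁻¹ * η (k - 1) = ((η (k - 1) / η k) ^ s + 1) ^ (1 + s)⁻¹ := by
  have hsplit : levelFactor s η k = (η (k - 1) ^ (1 + s))⁻¹ * ((η (k - 1) / η k) ^ s + 1) := by
    rw [levelFactor, div_rpow hk'.le hk.le, rpow_neg hk.le, rpow_neg hk'.le, rpow_add hk',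
      rpow_one]
    field_simp
  rw [hsplit, mul_rpow (by positivity) (by positivity), inv_rpow (by positivity),
    ← rpow_mul hk'.le, mul_inv_cancel₀ hs, rpow_one, mul_comm _⁻¹, inv_mul_cancel_right₀ hk'.ne']

lemma sum_levelFactor_mul_self_le {b : ℝ} {K : ℕ} (hs : 0 ≤ s) (hb : 0 < b)
    (hη : ∀ j : ℤ, -1 ≤ j → j ≤ K → b ≤ η j) :
    ∑ k ∈ range (K + 1), levelFactor s η k * η (k - 1) ≤ 2 * (K + 1) * b ^ (-s) := by
  have hbound : ∀ j : ℤ, -1 ≤ j → j ≤ K → η j ^ (-s) ≤ b ^ (-s) := fun j h₁ h₂ =>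
    rpow_le_rpow_of_nonpos hb (hη j h₁ h₂) (neg_nonpos.mpr hs)
  calc ∑ k ∈ range (K + 1), levelFactor s η k * η (k - 1)
      ≤ ∑ _k ∈ range (K + 1), 2 * b ^ (-s) := by
        refine sum_le_sum fun k hk => ?_
        have hkK : (k : ℤ) ≤ K := by have := mem_range.mp hk; omega
        rw [levelFactor_mul_self (hb.trans_le (hη _ (by omega) (by omega))).ne']
        linarith [hbound k (by omega) hkK, hbound (k - 1) (by omega) (by omega)]
    _ = 2 * (K + 1) * b ^ (-s) := by rw [sum_const, card_range, nsmul_eq_mul]; push_cast; ring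

lemma sum_levelFactor_rpow_mul_self_rpow_le {R : ℝ} {K : ℕ} (hs : 0 ≤ s)
    (hpos : ∀ j : ℤ, -1 ≤ j → 0 < η j) (hratio : ∀ k : ℕ, η (k - 1) ≤ R * η k) :
    (∑ k ∈ range (K + 1), levelFactor s η k ^ (1 + s)⁻¹ * η (k - 1)) ^ (1 + s) ≤
      (R ^ s + 1) * (K + 1) ^ (1 + s) := by
  have hR : 0 < R :=
    pos_of_mul_pos_left ((hpos (-1) le_rfl).trans_le (hratio 0)) (hpos 0 (by omega)).le
  have hterm : ∀ k : ℕ, levelFactor s η k ^ (1 + s)⁻¹ * η (k - 1) ∈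
      Set.Icc 0 ((R ^ s + 1) ^ (1 + s)⁻¹) := by
    intro k
    have hk := hpos k (by omega)
    have hk' := hpos (k - 1) (by omega)
    rw [levelFactor_rpow_mul_self hk hk' (by positivity)]
    refine ⟨by positivity, ?_⟩
    gcongr
    exact (div_le_iff₀ hk).mpr (hratio k)
  have hsum : ∑ k ∈ range (K + 1), levelFactor s η k ^ (1 + s)⁻¹ * η (k - 1) ≤
      (K + 1) * (R ^ s + 1) ^ (1 + s)⁻¹ := by
    simpa using sum_le_sum fun k (_ : k ∈ range (K + 1)) => (hterm k).2
  calc _ ≤ ((K + 1) * (R ^ s + 1) ^ (1 + s)⁻¹) ^ (1 + s) :=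
        rpow_le_rpow (sum_nonneg fun k _ => (hterm k).1) hsum (by positivity)
    _ = (R ^ s + 1) * (K + 1) ^ (1 + s) := by
      rw [mul_rpow (by positivity) (by positivity), ← rpow_mul (by positivity),
        inv_mul_cancel₀ (by positivity), rpow_one, mul_comm]

end LevelFactor

section GeometricTolerances

variable {q η0 ηm : ℝ} {η : ℤ → ℝ}

lemma min_mul_pow_le_of_geometric (hq0 : 0 ≤ q) (hq1 : q ≤ 1) (hη0 : 0 ≤ η0) (hηm : 0 ≤ ηm)
    (hneg : η (-1) = ηm) (hnat : ∀ k : ℕ, η k = q ^ k * η0) {K : ℕ} {j : ℤ} (hj : -1 ≤ j)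
    (hjK : j ≤ K) : min ηm η0 * q ^ K ≤ η j := by
  rcases (show j = -1 ∨ 0 ≤ j by omega) with rfl | hj0
  · rw [hneg]
    exact (mul_le_of_le_one_right (by positivity) (pow_le_one₀ hq0 hq1)).trans (min_le_left _ _)
  · lift j to ℕ using hj0
    rw [hnat, mul_comm]
    exact mul_le_mul (pow_le_pow_of_le_one hq0 hq1 (by exact_mod_cast hjK)) (min_le_right _ _)
      (by positivity) (by positivity)

lemma le_max_mul_of_geometric (hq0 : 0 < q) (hη0 : 0 < η0)
    (hneg : η (-1) = ηm) (hnat : ∀ k : ℕ, η k = q ^ k * η0) (k : ℕ) :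
    η (k - 1) ≤ max (ηm / η0) q⁻¹ * η k := by
  rcases k with _ | k
  · rw [hnat 0, Nat.cast_zero, zero_sub, hneg, pow_zero, one_mul]
    calc ηm = ηm / η0 * η0 := by field_simp
      _ ≤ _ := by gcongr; exact le_max_left _ _
  · rw [hnat (k + 1), Nat.cast_succ, add_sub_cancel_right, hnat]
    calc q ^ k * η0 = q⁻¹ * (q ^ (k + 1) * η0) := by field_simp; ring
      _ ≤ _ := by gcongr; exact le_max_right _ _

end GeometricTolerances

/-- `max c 1` rather than `c` covers `K = 0`, where minimality says nothing. -/
lemma div_max_one_mul_le_pow_of_isLeast {c q ε : ℝ} {K : ℕ} (hq0 : 0 < q) (hq1 : q ≤ 1)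
    (hε : ε < 1) (hK : IsLeast {n : ℕ | c * q ^ n ≤ ε} K) :
    q / max c 1 * ε ≤ q ^ K := by
  have hM : 0 < max c 1 := lt_max_of_lt_right one_pos
  rw [div_mul_eq_mul_div, div_le_iff₀ hM]
  rcases K with _ | K
  · nlinarith [le_max_right c 1]
  · have hlt : ε < c * q ^ K := not_le.mp fun h => by have := hK.2 h; omega
    calc q * ε ≤ q * (c * q ^ K) := by gcongr
      _ = q ^ (K + 1) * c := by ring
      _ ≤ q ^ (K + 1) * max c 1 := by gcongr; exact le_max_left _ _

lemma exists_natCast_add_one_le_mul_one_add_abs_log {a q : ℝ} (ha : 0 < a) (hq0 : 0 < q)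
    (hq1 : q < 1) : ∃ C, 0 < C ∧ ∀ (ε : ℝ) (K : ℕ), 0 < ε → a * ε ≤ q ^ K →
      (K : ℝ) + 1 ≤ C * (1 + |log ε|) := by
  have hL : 0 < -log q := neg_pos.mpr (log_neg hq0 hq1)
  refine ⟨1 + (|log a| + 1) / -log q, by positivity, fun ε K hε h => ?_⟩
  have hlog : log a + log ε ≤ K * log q := by
    rw [← log_mul ha.ne' hε.ne', ← log_pow]
    exact log_le_log (by positivity) h
  have hK : K * -log q ≤ |log a| + |log ε| := by
    nlinarith [neg_abs_le (log a), neg_abs_le (log ε)]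
  have hK' : (K : ℝ) ≤ (|log a| + 1) / -log q * (1 + |log ε|) := by
    rw [div_mul_eq_mul_div, le_div_iff₀ hL]
    nlinarith [abs_nonneg (log a), abs_nonneg (log ε)]
  nlinarith [abs_nonneg (log ε)]

lemma add_le_mul_rpow_of_le_mul {T₁ T₂ A B C N L E s : ℝ} (hA : 0 ≤ A) (hB : 0 ≤ B)
    (hC : 0 ≤ C) (hE : 0 ≤ E) (hs : 0 ≤ s) (hN : 0 ≤ N) (hNL : N ≤ C * L) (hL : 1 ≤ L)
    (h₁ : T₁ ≤ A * N ^ (1 + s) * E) (h₂ : T₂ ≤ B * N * E) :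
    T₁ + T₂ ≤ (A * C ^ (1 + s) + B * C) * E * L ^ (1 + s) := by
  have hL' : L ≤ L ^ (1 + s) := self_le_rpow_of_one_le hL (by linarith)
  have hN₁ : N ^ (1 + s) ≤ C ^ (1 + s) * L ^ (1 + s) := by
    rw [← mul_rpow hC (by linarith)]
    exact rpow_le_rpow hN hNL (by linarith)
  have hN₂ : N ≤ C * L ^ (1 + s) := hNL.trans (by gcongr)
  calc T₁ + T₂ ≤ A * (C ^ (1 + s) * L ^ (1 + s)) * E + B * (C * L ^ (1 + s)) * E :=
        add_le_add (h₁.trans (by gcongr)) (h₂.trans (by gcongr))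
    _ = _ := by ring

theorem epsilon_cost_case_9_general
    (q η0 ηm s μ CI CX : ℝ)
    (hq0 : 0 < q) (hq1 : q < 1) (hη0 : 0 < η0) (hηm : 0 < ηm)
    (hs : 0 < s) (hsμ : s * μ = 1)
    (hCI : 0 < CI)
    (η : ℤ → ℝ)
    (hηneg : η (-1) = ηm)
    (hηnat : ∀ k : ℕ, η (k : ℤ) = q ^ k * η0)
    (Kf : ℝ → ℕ)
    (hKf : ∀ ε : ℝ, 0 < ε → ε < 1 →
      IsLeast {K : ℕ | 2 * CX * q ^ K * η0 ≤ ε} (Kf ε))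
    (F : ℕ → ℝ)
    (hF : ∀ k : ℕ,
      F k = (η (k : ℤ) ^ (-s) + η ((k : ℤ) - 1) ^ (-s)) * (η ((k : ℤ) - 1))⁻¹)
    (G : ℕ → ℝ)
    (hG : ∀ K : ℕ,
      G K = ∑ k ∈ range (K + 1), F k ^ (μ / (μ + 1)) * η ((k : ℤ) - 1)) :
    ∃ C : ℝ, 0 < C ∧ ∀ ε : ℝ, 0 < ε → ε < 1 →
      (2 * CI) ^ (1 / μ) * G (Kf ε) ^ ((μ + 1) / μ) * ε ^ (-(1 / μ)) +
          ∑ k ∈ range (Kf ε + 1), F k * η ((k : ℤ) - 1) ≤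
        C * ε ^ (-(1 / μ)) * (1 + |Real.log ε|) ^ (1 + 1 / μ) := by
  obtain rfl : μ = s⁻¹ := eq_inv_of_mul_eq_one_right hsμ
  have hθ : s⁻¹ / (s⁻¹ + 1) = (1 + s)⁻¹ := by field_simp
  have hp : (s⁻¹ + 1) / s⁻¹ = 1 + s := by field_simp
  obtain rfl : F = levelFactor s η := funext hF
  simp only [hG, hθ, hp, one_div, inv_inv]
  set a := q / max (2 * CX * η0) 1
  set b := min ηm η0 * a
  set R := max (ηm / η0) q⁻¹
  obtain ⟨C, hC, hKlog⟩ :=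
    exists_natCast_add_one_le_mul_one_add_abs_log (a := a) (by positivity) hq0 hq1
  refine ⟨(2 * CI) ^ s * (R ^ s + 1) * C ^ (1 + s) + 2 * b ^ (-s) * C, by positivity,
    fun ε hε0 hε1 => ?_⟩
  have hKε : a * ε ≤ q ^ Kf ε := div_max_one_mul_le_pow_of_isLeast hq0 hq1.le hε1
    (by simpa only [mul_right_comm _ (q ^ _) η0] using hKf ε hε0 hε1)
  have hη_lower {K : ℕ} {j : ℤ} (h₁ : -1 ≤ j) (h₂ : j ≤ K) : min ηm η0 * q ^ K ≤ η j :=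
    min_mul_pow_le_of_geometric hq0.le hq1.le hη0.le hηm.le hηneg hηnat h₁ h₂
  have hGK := sum_levelFactor_rpow_mul_self_rpow_le (η := η) (K := Kf ε) hs.le
    (fun j hj => (by positivity : 0 < min ηm η0 * q ^ j.toNat).trans_le
      (hη_lower hj (Int.self_le_toNat j)))
    (le_max_mul_of_geometric hq0 hη0 hηneg hηnat)
  have hsum := sum_levelFactor_mul_self_le (b := b * ε) hs.le (by positivity)
    fun j h₁ h₂ =>
      (show b * ε ≤ min ηm η0 * q ^ Kf ε by rw [mul_assoc]; gcongr).trans (hη_lower h₁ h₂)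
  refine add_le_mul_rpow_of_le_mul (by positivity) (by positivity) hC.le (by positivity) hs.le
    (by positivity) (hKlog ε _ hε0 hKε) (by linarith [abs_nonneg (Real.log ε)]) ?_ ?_
  · rw [mul_assoc ((2 * CI) ^ s) (R ^ s + 1)]
    gcongr
  · exact hsum.trans_eq (by rw [mul_rpow (by positivity) hε0.le]; ring)

/-- Theorem 2, case sμ = 1: ε-cost bound of the multilevel stochastic collocation
method with geometric spatial tolerances. -/
theorem epsilon_cost_case_9
    (q η0 ηm s μ CI CX : ℝ)
    (hq0 : 0 < q) (hq1 : q < 1) (hη0 : 0 < η0) (hηm : 0 < ηm)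
    (hs : 0 < s) (hμ : 0 < μ) (hsμ : s * μ = 1)
    (hCI : 0 < CI) (hCX : 0 < CX)
    (η : ℤ → ℝ)
    (hηneg : η (-1) = ηm)
    (hηnat : ∀ k : ℕ, η (k : ℤ) = q ^ k * η0)
    (Kf : ℝ → ℕ)
    (hKf : ∀ ε : ℝ, 0 < ε → ε < 1 →
      IsLeast {K : ℕ | 2 * CX * q ^ K * η0 ≤ ε} (Kf ε))
    (F : ℕ → ℝ)
    (hF : ∀ k : ℕ,
      F k = (η (k : ℤ) ^ (-s) + η ((k : ℤ) - 1) ^ (-s)) * (η ((k : ℤ) - 1))⁻¹)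
    (G : ℕ → ℝ)
    (hG : ∀ K : ℕ,
      G K = ∑ k ∈ range (K + 1), F k ^ (μ / (μ + 1)) * η ((k : ℤ) - 1)) :
    ∃ C : ℝ, 0 < C ∧ ∀ ε : ℝ, 0 < ε → ε < 1 →
      (2 * CI) ^ (1 / μ) * G (Kf ε) ^ ((μ + 1) / μ) * ε ^ (-(1 / μ)) +
          ∑ k ∈ range (Kf ε + 1), F k * η ((k : ℤ) - 1) ≤
        C * ε ^ (-(1 / μ)) * (1 + |Real.log ε|) ^ (1 + 1 / μ) :=
  epsilon_cost_case_9_general q η0 ηm s μ CI CX hq0 hq1 hη0 hηm hs hsμ hCI η hηneg hηnat Kf hKf F hF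
    G hG
end

section
/- (Theorem 2, case s\mu > 1.) Let q \in (0,1), let \eta_0 > 0 and \eta_{-1} > 0, and set \eta_k := q^k \eta_0 for k \ge 1. Let s > 0, \mu > 0 with s\mu > 1, and let C_I > 0, C_X > 0. For \varepsilon \in (0,1) let K(\varepsilon) be the least natural number K with 2 C_X q^K \eta_0 \le \varepsilon, and define F_k := (\eta_k^{-s} + \eta_{k-1}^{-s}) \eta_{k-1}^{-1} and G_K := \sum_{k=0}^{K} F_k^{\mu/(\mu+1)} \eta_{k-1}. Then there exists a constant C > 0, independent of \varepsilon, such that for all \varepsilon \in (0,1): (2 C_I)^{1/\mu} G_{K(\varepsilon)}^{(\mu+1)/\mu} \varepsilon^{-1/\mu} + \sum_{k=0}^{K(\varepsilon)} F_k \eta_{k-1} \le C \varepsilon^{-s}. -/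
open Finset

private lemma pow_rpow_comm' {x : ℝ} (hx : 0 ≤ x) (n : ℕ) (y : ℝ) :
    (x ^ n) ^ y = (x ^ y) ^ n := by
  rw [← Real.rpow_natCast x n, ← Real.rpow_mul hx, mul_comm (n : ℝ) y,
    Real.rpow_mul hx, Real.rpow_natCast]

/-- Theorem 2, case sμ > 1: ε-cost bound of the multilevel stochastic collocation
method with geometric spatial tolerances. -/
theorem epsilon_cost_case_10
    (q η0 ηm s μ CI CX : ℝ)
    (hq0 : 0 < q) (hq1 : q < 1) (hη0 : 0 < η0) (hηm : 0 < ηm)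
    (hs : 0 < s) (hμ : 0 < μ) (hsμ : 1 < s * μ)
    (hCI : 0 < CI) (hCX : 0 < CX)
    (η : ℤ → ℝ)
    (hηneg : η (-1) = ηm)
    (hηnat : ∀ k : ℕ, η (k : ℤ) = q ^ k * η0)
    (Kf : ℝ → ℕ)
    (hKf : ∀ ε : ℝ, 0 < ε → ε < 1 →
      IsLeast {K : ℕ | 2 * CX * q ^ K * η0 ≤ ε} (Kf ε))
    (F : ℕ → ℝ)
    (hF : ∀ k : ℕ,
      F k = (η (k : ℤ) ^ (-s) + η ((k : ℤ) - 1) ^ (-s)) * (η ((k : ℤ) - 1))⁻¹)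
    (G : ℕ → ℝ)
    (hG : ∀ K : ℕ,
      G K = ∑ k ∈ range (K + 1), F k ^ (μ / (μ + 1)) * η ((k : ℤ) - 1)) :
    ∃ C : ℝ, 0 < C ∧ ∀ ε : ℝ, 0 < ε → ε < 1 →
      (2 * CI) ^ (1 / μ) * G (Kf ε) ^ ((μ + 1) / μ) * ε ^ (-(1 / μ)) +
          ∑ k ∈ range (Kf ε + 1), F k * η ((k : ℤ) - 1) ≤
        C * ε ^ (-s) := by
  have hμ1 : (0:ℝ) < μ + 1 := by linarith
  -- positivity of η at the relevant points
  have hηpos' : ∀ k : ℕ, 0 < η (k : ℤ) := by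
    intro k; rw [hηnat k]; positivity
  have hηpos : ∀ k : ℕ, 0 < η ((k : ℤ) - 1) := by
    intro k
    cases k with
    | zero => simpa [hηneg] using hηm
    | succ n =>
      have e : ((n + 1 : ℕ) : ℤ) - 1 = ((n : ℕ) : ℤ) := by push_cast; ring
      rw [e, hηnat n]; positivity
  have hηm1 : ∀ n : ℕ, η (((n + 1 : ℕ) : ℤ) - 1) = q ^ n * η0 := by
    intro n
    have e : ((n + 1 : ℕ) : ℤ) - 1 = ((n : ℕ) : ℤ) := by push_cast; ring
    rw [e, hηnat n]
  have hη0' : η (((0 : ℕ) : ℤ) - 1) = ηm := by norm_num [hηneg]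
  have hFpos : ∀ k : ℕ, 0 < F k := by
    intro k
    rw [hF k]
    have h1 := hηpos k; have h2 := hηpos' k
    positivity
  -- basic constants
  set a : ℝ := μ / (μ + 1) with ha_def
  have ha0 : 0 < a := div_pos hμ hμ1
  have ha1 : a < 1 := by rw [ha_def, div_lt_one hμ1]; linarith
  set r : ℝ := q ^ (-s) with hr_def
  have hr1 : 1 < r := by
    rw [hr_def, Real.one_lt_rpow_iff_of_pos hq0]
    exact Or.inr ⟨hq1, by linarith⟩
  have hr0 : 0 < r := lt_trans one_pos hr1
  have hmulr : r * q ^ s = 1 := by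
    rw [hr_def, ← Real.rpow_add hq0]; simp
  set A : ℝ := max (η0 ^ (-s) + ηm ^ (-s)) (η0 ^ (-s) * (1 + q ^ s)) with hA_def
  have hA0 : 0 < A := by
    have : 0 < η0 ^ (-s) + ηm ^ (-s) := by positivity
    exact lt_of_lt_of_le this (le_max_left _ _)
  -- claim 1 : F k * η_{k-1} ≤ A * r^k
  have hclaim1 : ∀ k : ℕ, F k * η ((k : ℤ) - 1) ≤ A * r ^ k := by
    intro k
    cases k with
    | zero =>
      have e2 : η ((0 : ℕ) : ℤ) = η0 := by simpa using hηnat 0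
      rw [hF 0, hη0', e2, pow_zero, mul_one]
      calc (η0 ^ (-s) + ηm ^ (-s)) * ηm⁻¹ * ηm
          = η0 ^ (-s) + ηm ^ (-s) := by field_simp
        _ ≤ A := le_max_left _ _
    | succ n =>
      have e1 := hηm1 n
      have e2 : η ((n + 1 : ℕ) : ℤ) = q ^ (n + 1) * η0 := hηnat (n + 1)
      rw [hF (n + 1), e1, e2]
      have hqn : (0:ℝ) < q ^ n * η0 := by positivity
      have hrn : r ^ (n + 1) * q ^ s = r ^ n := by
        rw [pow_succ, mul_assoc, hmulr, mul_one]
      have eA : (q ^ (n + 1) * η0) ^ (-s) = r ^ (n + 1) * η0 ^ (-s) := by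
        rw [Real.mul_rpow (by positivity) hη0.le, pow_rpow_comm' hq0.le]
      have eB : (q ^ n * η0) ^ (-s) = r ^ n * η0 ^ (-s) := by
        rw [Real.mul_rpow (by positivity) hη0.le, pow_rpow_comm' hq0.le]
      calc ((q ^ (n + 1) * η0) ^ (-s) + (q ^ n * η0) ^ (-s)) * (q ^ n * η0)⁻¹ *
            (q ^ n * η0)
          = (q ^ (n + 1) * η0) ^ (-s) + (q ^ n * η0) ^ (-s) := by field_simp
        _ = r ^ (n + 1) * η0 ^ (-s) + r ^ n * η0 ^ (-s) := by rw [eA, eB]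
        _ = (η0 ^ (-s) * (1 + q ^ s)) * r ^ (n + 1) := by rw [← hrn]; ring
        _ ≤ A * r ^ (n + 1) := by
            have hle : η0 ^ (-s) * (1 + q ^ s) ≤ A := le_max_right _ _
            exact mul_le_mul_of_nonneg_right hle (by positivity)
  -- the geometric ratio t
  set t : ℝ := q ^ (1 - a) * r ^ a with ht_def
  have ht_eq : t = q ^ ((1 - s * μ) / (μ + 1)) := by
    rw [ht_def, hr_def, ← Real.rpow_mul hq0.le, ← Real.rpow_add hq0]
    congr 1
    rw [ha_def]; field_simp; ring
  have ht1 : 1 < t := by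
    rw [ht_eq, Real.one_lt_rpow_iff_of_pos hq0]
    exact Or.inr ⟨hq1, div_neg_of_neg_of_pos (by linarith) hμ1⟩
  have ht0 : 0 < t := lt_trans one_pos ht1
  set M : ℝ := max (ηm ^ (1 - a)) ((η0 / q) ^ (1 - a)) with hM_def
  have hM0 : 0 < M :=
    lt_of_lt_of_le (Real.rpow_pos_of_pos hηm _) (le_max_left _ _)
  -- claim 2 : F k ^ a * η_{k-1} ≤ A^a * M * t^k
  have hclaim2 : ∀ k : ℕ, F k ^ a * η ((k : ℤ) - 1) ≤ A ^ a * M * t ^ k := by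
    intro k
    have hηk := hηpos k
    have h1 : F k ≤ A * r ^ k / η ((k : ℤ) - 1) := by
      rw [le_div_iff₀ hηk]; exact hclaim1 k
    have h2 : F k ^ a ≤ (A * r ^ k) ^ a / η ((k : ℤ) - 1) ^ a := by
      calc F k ^ a ≤ (A * r ^ k / η ((k : ℤ) - 1)) ^ a :=
            Real.rpow_le_rpow (hFpos k).le h1 ha0.le
        _ = (A * r ^ k) ^ a / η ((k : ℤ) - 1) ^ a :=
            Real.div_rpow (by positivity) hηk.le a
    have h3 : F k ^ a * η ((k : ℤ) - 1) ≤ (A * r ^ k) ^ a * η ((k : ℤ) - 1) ^ (1 - a) := by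
      have e : (A * r ^ k) ^ a / η ((k : ℤ) - 1) ^ a * η ((k : ℤ) - 1) =
          (A * r ^ k) ^ a * η ((k : ℤ) - 1) ^ (1 - a) := by
        rw [Real.rpow_sub hηk, Real.rpow_one]
        field_simp
      calc F k ^ a * η ((k : ℤ) - 1)
          ≤ (A * r ^ k) ^ a / η ((k : ℤ) - 1) ^ a * η ((k : ℤ) - 1) :=
            mul_le_mul_of_nonneg_right h2 hηk.le
        _ = _ := e
    have h4 : η ((k : ℤ) - 1) ^ (1 - a) ≤ M * (q ^ (1 - a)) ^ k := by
      cases k with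
      | zero =>
        rw [hη0', pow_zero, mul_one]
        exact le_max_left _ _
      | succ n =>
        rw [hηm1 n]
        have e : q ^ n * η0 = q ^ (n + 1) * (η0 / q) := by
          rw [pow_succ]; field_simp
        rw [e, Real.mul_rpow (by positivity) (by positivity),
          pow_rpow_comm' hq0.le]
        calc (q ^ (1 - a)) ^ (n + 1) * (η0 / q) ^ (1 - a)
            ≤ (q ^ (1 - a)) ^ (n + 1) * M :=
              mul_le_mul_of_nonneg_left (le_max_right _ _) (by positivity)
          _ = M * (q ^ (1 - a)) ^ (n + 1) := by ring
    calc F k ^ a * η ((k : ℤ) - 1)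
        ≤ (A * r ^ k) ^ a * η ((k : ℤ) - 1) ^ (1 - a) := h3
      _ ≤ (A * r ^ k) ^ a * (M * (q ^ (1 - a)) ^ k) :=
          mul_le_mul_of_nonneg_left h4 (by positivity)
      _ = A ^ a * M * t ^ k := by
          rw [Real.mul_rpow hA0.le (by positivity), pow_rpow_comm' hr0.le,
            ht_def, mul_pow]
          ring
  have hG0 : ∀ K : ℕ, 0 ≤ G K := by
    intro K
    rw [hG K]
    refine Finset.sum_nonneg fun k _ => ?_
    exact mul_nonneg (Real.rpow_nonneg (hFpos k).le _) (hηpos k).le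
  set GB : ℝ := A ^ a * M * t / (t - 1) with hGB_def
  have hGB0 : 0 < GB := by
    exact div_pos (mul_pos (mul_pos (Real.rpow_pos_of_pos hA0 a) hM0) ht0) (by linarith)
  have hGle : ∀ K : ℕ, G K ≤ GB * t ^ K := by
    intro K
    rw [hG K]
    calc ∑ k ∈ range (K + 1), F k ^ a * η ((k : ℤ) - 1)
        ≤ ∑ k ∈ range (K + 1), A ^ a * M * t ^ k :=
          Finset.sum_le_sum fun k _ => hclaim2 k
      _ = A ^ a * M * ∑ k ∈ range (K + 1), t ^ k := by rw [← Finset.mul_sum]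
      _ = A ^ a * M * ((t ^ (K + 1) - 1) / (t - 1)) := by
          rw [geom_sum_eq (ne_of_gt ht1)]
      _ ≤ A ^ a * M * (t ^ (K + 1) / (t - 1)) := by
          apply mul_le_mul_of_nonneg_left _ (by positivity)
          apply div_le_div_of_nonneg_right ?_ (by linarith)
          linarith
      _ = GB * t ^ K := by
          rw [hGB_def, pow_succ]; field_simp
  set b : ℝ := (μ + 1) / μ with hb_def
  have hb0 : 0 < b := div_pos hμ1 hμ
  have htb : t ^ b = q ^ (1 / μ) * r := by
    rw [ht_eq, ← Real.rpow_mul hq0.le, hr_def, ← Real.rpow_add hq0]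
    congr 1
    rw [hb_def]; field_simp; ring
  have hqq : q ^ (1 / μ) * q ^ (-(1 / μ)) = 1 := by
    rw [← Real.rpow_add hq0]; simp
  -- the constant
  set C1 : ℝ := (2 * CI) ^ (1 / μ) * GB ^ b * (2 * CX * η0) ^ (-(1 / μ)) with hC1_def
  have hC10 : 0 < C1 := by positivity
  set D : ℝ := max 1 ((2 * CX * η0 / q) ^ s) with hD_def
  have hD0 : 0 < D := lt_of_lt_of_le one_pos (le_max_left _ _)
  have hAr0 : 0 < A * r / (r - 1) := div_pos (mul_pos hA0 hr0) (by linarith)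
  refine ⟨(C1 + A * r / (r - 1)) * D, mul_pos (by linarith) hD0, ?_⟩
  intro ε hε0 hε1
  obtain ⟨hmem, hlb⟩ := hKf ε hε0 hε1
  set K : ℕ := Kf ε with hK_def
  have hmem' : 2 * CX * q ^ K * η0 ≤ ε := hmem
  -- bound on G K ^ b
  have hGKb : G K ^ b ≤ GB ^ b * ((q ^ (1 / μ)) ^ K * r ^ K) := by
    calc G K ^ b ≤ (GB * t ^ K) ^ b :=
          Real.rpow_le_rpow (hG0 K) (hGle K) hb0.le
      _ = GB ^ b * (t ^ K) ^ b := Real.mul_rpow hGB0.le (by positivity)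
      _ = GB ^ b * (t ^ b) ^ K := by rw [pow_rpow_comm' ht0.le]
      _ = GB ^ b * ((q ^ (1 / μ)) ^ K * r ^ K) := by rw [htb, mul_pow]
  -- bound on ε ^ (-(1/μ))
  have hεb : ε ^ (-(1 / μ)) ≤ (2 * CX * η0) ^ (-(1 / μ)) * (q ^ (-(1 / μ))) ^ K := by
    have h1 : ε ^ (-(1 / μ)) ≤ (2 * CX * q ^ K * η0) ^ (-(1 / μ)) := by
      apply Real.rpow_le_rpow_of_nonpos (by positivity) hmem'
      have : 0 < 1 / μ := by positivity
      linarith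
    have h2 : (2 * CX * q ^ K * η0 : ℝ) = (2 * CX * η0) * q ^ K := by ring
    calc ε ^ (-(1 / μ)) ≤ (2 * CX * q ^ K * η0) ^ (-(1 / μ)) := h1
      _ = (2 * CX * η0) ^ (-(1 / μ)) * (q ^ (-(1 / μ))) ^ K := by
          rw [h2, Real.mul_rpow (by positivity) (by positivity),
            pow_rpow_comm' hq0.le]
  -- first term
  have hT1 : (2 * CI) ^ (1 / μ) * G K ^ b * ε ^ (-(1 / μ)) ≤ C1 * r ^ K := by
    calc (2 * CI) ^ (1 / μ) * G K ^ b * ε ^ (-(1 / μ))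
        ≤ (2 * CI) ^ (1 / μ) * (GB ^ b * ((q ^ (1 / μ)) ^ K * r ^ K)) *
            ((2 * CX * η0) ^ (-(1 / μ)) * (q ^ (-(1 / μ))) ^ K) := by
          have hx : (0:ℝ) ≤ (2 * CI) ^ (1 / μ) := by positivity
          have hy : (0:ℝ) ≤ G K ^ b := Real.rpow_nonneg (hG0 K) _
          have hz : (0:ℝ) ≤ ε ^ (-(1 / μ)) := by positivity
          apply mul_le_mul _ hεb hz (by positivity)
          exact mul_le_mul_of_nonneg_left hGKb hx
      _ = C1 * r ^ K * (q ^ (1 / μ) * q ^ (-(1 / μ))) ^ K := by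
          rw [hC1_def, mul_pow]; ring
      _ = C1 * r ^ K := by rw [hqq, one_pow, mul_one]
  -- second term
  have hT2 : ∑ k ∈ range (K + 1), F k * η ((k : ℤ) - 1) ≤ A * r / (r - 1) * r ^ K := by
    calc ∑ k ∈ range (K + 1), F k * η ((k : ℤ) - 1)
        ≤ ∑ k ∈ range (K + 1), A * r ^ k :=
          Finset.sum_le_sum fun k _ => hclaim1 k
      _ = A * ((r ^ (K + 1) - 1) / (r - 1)) := by
          rw [← Finset.mul_sum, geom_sum_eq (ne_of_gt hr1)]
      _ ≤ A * (r ^ (K + 1) / (r - 1)) := by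
          apply mul_le_mul_of_nonneg_left _ hA0.le
          apply div_le_div_of_nonneg_right ?_ (by linarith)
          linarith
      _ = A * r / (r - 1) * r ^ K := by
          rw [pow_succ]; field_simp
  -- bound r^K ≤ D * ε^(-s)
  have hεs : 1 ≤ ε ^ (-s) := by
    have : 1 < ε ^ (-s) := by
      rw [Real.one_lt_rpow_iff_of_pos hε0]
      exact Or.inr ⟨hε1, by linarith⟩
    linarith
  have hrK : r ^ K ≤ D * ε ^ (-s) := by
    rcases Nat.eq_zero_or_pos K with hK | hK
    · rw [hK, pow_zero]
      calc (1:ℝ) ≤ ε ^ (-s) := hεs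
        _ = 1 * ε ^ (-s) := (one_mul _).symm
        _ ≤ D * ε ^ (-s) := by
            apply mul_le_mul_of_nonneg_right (le_max_left _ _) (by positivity)
    · have hKm : K - 1 < K := Nat.sub_lt hK one_pos
      have hnot : ¬ (2 * CX * q ^ (K - 1) * η0 ≤ ε) := by
        intro h
        exact absurd (hlb h) (not_le.mpr hKm)
      have hε : ε ≤ 2 * CX * q ^ (K - 1) * η0 := (not_le.mp hnot).le
      have hq' : 2 * CX * q ^ (K - 1) * η0 = (2 * CX * η0 / q) * q ^ K := by
        have e : q ^ K = q ^ (K - 1) * q := by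
          rw [← pow_succ]; congr 1; omega
        rw [e]; field_simp
      have hcq : (0:ℝ) < 2 * CX * η0 / q := by positivity
      have hqK : ε / (2 * CX * η0 / q) ≤ q ^ K := by
        rw [div_le_iff₀ hcq]
        rw [hq'] at hε; linarith [hε]
      have h5 : (q ^ K) ^ (-s) ≤ (ε / (2 * CX * η0 / q)) ^ (-s) :=
        Real.rpow_le_rpow_of_nonpos (by positivity) hqK (by linarith)
      have h6 : (ε / (2 * CX * η0 / q)) ^ (-s) = (2 * CX * η0 / q) ^ s * ε ^ (-s) := by
        rw [Real.div_rpow hε0.le hcq.le, Real.rpow_neg hcq.le,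
          div_eq_mul_inv, inv_inv, mul_comm]
      calc r ^ K = (q ^ K) ^ (-s) := (pow_rpow_comm' hq0.le K (-s)).symm
        _ ≤ (ε / (2 * CX * η0 / q)) ^ (-s) := h5
        _ = (2 * CX * η0 / q) ^ s * ε ^ (-s) := h6
        _ ≤ D * ε ^ (-s) := by
            apply mul_le_mul_of_nonneg_right (le_max_right _ _) (by positivity)
  calc (2 * CI) ^ (1 / μ) * G K ^ ((μ + 1) / μ) * ε ^ (-(1 / μ)) +
        ∑ k ∈ range (K + 1), F k * η ((k : ℤ) - 1)
      ≤ C1 * r ^ K + A * r / (r - 1) * r ^ K := add_le_add hT1 hT2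
    _ = (C1 + A * r / (r - 1)) * r ^ K := by ring
    _ ≤ (C1 + A * r / (r - 1)) * (D * ε ^ (-s)) := by
        have h7 : 0 < A * r / (r - 1) := div_pos (mul_pos hA0 hr0) (by linarith)
        apply mul_le_mul_of_nonneg_left hrK (by linarith)
    _ = (C1 + A * r / (r - 1)) * D * ε ^ (-s) := by ring
end

section
/- (Proposition on functionals, abstract form.) Let q \in (0,1), \eta_0 > 0, \eta_{-1} > 0, and set \eta_k := q^k \eta_0 for k \ge 1. Let s^* > 0, \mu^* > 0, C_X > 0, C_I > 0. Let \psi \in \mathbb{R} and \psi_k \in \mathbb{R} for all natural numbers k, with \psi_{-1} := 0, such that |\psi - \psi_k| \le C_X \eta_k for all k. For each k and each positive integer M, let e_{k,M} \in \mathbb{R} satisfy |(\psi_k - \psi_{k-1}) - e_{k,M}| \le C_I M^{-\mu^*} \eta_{k-1}. Then there exists a constant C > 0 such that for every \varepsilon \in (0,1) there exist a natural number K and positive integers M_0, ..., M_K with |\psi - \sum_{k=0}^{K} e_{k, M_{K-k}}| \le \varepsilon and \sum_{k=0}^{K} M_{K-k} (\eta_k^{-s^*} + \eta_{k-1}^{-s^*})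 \le C \varepsilon^{-1/\mu^*} if s^* \mu^* < 1, \le C \varepsilon^{-1/\mu^*} (1+|\log \varepsilon|)^{1+1/\mu^*} if s^* \mu^* = 1, and \le C \varepsilon^{-s^*} if s^* \mu^* > 1. -/
set_option maxHeartbeats 800000
open Finset

lemma rpow_pow_comm (q : ℝ) (hq : 0 ≤ q) (z : ℝ) (n : ℕ) : ((q^n : ℝ))^z = (q^z)^n := by
  rw [← Real.rpow_natCast q n, ← Real.rpow_natCast (q^z) n, ← Real.rpow_mul hq,
    ← Real.rpow_mul hq, mul_comm]

lemma tele_sum (ψk : ℕ → ℝ) (n : ℕ) :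
    ∑ k ∈ range (n+1), (ψk k - if k = 0 then 0 else ψk (k-1)) = ψk n := by
  induction n with
  | zero => simp
  | succ m ih => rw [sum_range_succ, ih]; simp

lemma geom_bound_lt (ρ : ℝ) (h0 : 0 ≤ ρ) (h1 : ρ < 1) (n : ℕ) :
    ∑ k ∈ range n, ρ^k ≤ 1/(1-ρ) := by
  have h2 : (0:ℝ) < 1 - ρ := by linarith
  have h3 : ∑ k ∈ range n, ρ^k = (1 - ρ^n)/(1-ρ) := by
    rw [geom_sum_eq (by linarith)]
    rw [div_eq_div_iff (by linarith) (by linarith)]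
    ring
  rw [h3]
  apply div_le_div_of_nonneg_right ?_ h2.le |>.trans_eq rfl
  · nlinarith [pow_nonneg h0 n]

lemma geom_bound_gt (ρ : ℝ) (h : 1 < ρ) (n : ℕ) :
    ∑ k ∈ range (n+1), ρ^k ≤ ρ*ρ^n/(ρ-1) := by
  rw [geom_sum_eq (by linarith)]
  have h1 : (0:ℝ) < ρ - 1 := by linarith
  have h2 : ρ^(n+1) - 1 ≤ ρ*ρ^n := by rw [pow_succ]; nlinarith [pow_nonneg (by linarith : (0:ℝ) ≤ ρ) n]
  exact div_le_div_of_nonneg_right h2 h1.le |>.trans_eq rfl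

theorem aux_construction
    (q η0 ηm s μ CX CI : ℝ)
    (hq0 : 0 < q) (hq1 : q < 1) (hη0 : 0 < η0) (hηm : 0 < ηm)
    (hs : 0 < s) (hμ : 0 < μ) (hCX : 0 < CX) (hCI : 0 < CI)
    (η : ℤ → ℝ)
    (hηneg : η (-1) = ηm)
    (hηnat : ∀ k : ℕ, η (k : ℤ) = q ^ k * η0)
    (ψ : ℝ) (ψk : ℕ → ℝ)
    (hψ : ∀ k : ℕ, |ψ - ψk k| ≤ CX * η (k : ℤ))
    (e : ℕ → ℕ → ℝ)
    (he : ∀ k : ℕ, ∀ M : ℕ, 0 < M →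
      |(ψk k - if k = 0 then 0 else ψk (k - 1)) - e k M| ≤
        CI * (M : ℝ) ^ (-μ) * η ((k : ℤ) - 1)) :
    ∀ ε : ℝ, 0 < ε → ε < 1 →
      ∃ (K : ℕ) (M : ℕ → ℕ), (∀ k ≤ K, 0 < M k) ∧
        |ψ - ∑ k ∈ range (K + 1), e k (M (K - k))| ≤ ε ∧
        ∑ k ∈ range (K + 1),
            (M (K - k) : ℝ) * (η (k : ℤ) ^ (-s) + η ((k : ℤ) - 1) ^ (-s)) ≤
          (2*η0^(-s) + ηm^(-s)) * (2*CI*(max ηm (η0/q)))^(1/μ) * ε^(-(1/μ)) *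
              (∑ k ∈ range (K+1), (q^((1-s*μ)/(1+μ)))^k)^(1+1/μ)
            + (2*η0^(-s) + ηm^(-s)) * (1+2*CX*η0/q)^s * q^(-s)/(q^(-s)-1) * ε^(-s) ∧
        ε/(1+2*CX*η0/q) ≤ q^K ∧
        ((K:ℝ)+1) ≤ (2 + (1+|Real.log (2*CX*η0)|)/(-Real.log q))*(1+|Real.log ε|) := by
  intro ε hε0 hε1
  have hμ1 : (0:ℝ) < 1 + μ := by linarith
  obtain ⟨α, hαdef⟩ : ∃ α : ℝ, α = (1-s*μ)/(1+μ) := ⟨_, rfl⟩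
  obtain ⟨t, htdef⟩ : ∃ t : ℝ, t = (1+s)/(1+μ) := ⟨_, rfl⟩
  obtain ⟨B, hBdef⟩ : ∃ B : ℝ, B = max ηm (η0/q) := ⟨_, rfl⟩
  have hB0 : 0 < B := by rw [hBdef]; exact lt_max_iff.mpr (Or.inl hηm)
  obtain ⟨C1, hC1def⟩ : ∃ C1 : ℝ, C1 = 2*η0^(-s) + ηm^(-s) := ⟨_, rfl⟩
  have hη0s : (0:ℝ) < η0^(-s) := Real.rpow_pos_of_pos hη0 _
  have hηms : (0:ℝ) < ηm^(-s) := Real.rpow_pos_of_pos hηm _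
  have hC10 : 0 < C1 := by rw [hC1def]; linarith
  have hηpos : ∀ k : ℕ, 0 < η (k:ℤ) := fun k => by
    rw [hηnat]; positivity
  have hbpos : ∀ k : ℕ, 0 < η ((k:ℤ)-1) := by
    intro k
    cases k with
    | zero => simpa [hηneg] using hηm
    | succ n =>
        rw [show ((n+1:ℕ):ℤ)-1 = (n:ℤ) by push_cast; ring, hηnat]
        positivity
  have hbB : ∀ k : ℕ, η ((k:ℤ)-1) ≤ B * q^k := by
    intro k
    cases k with
    | zero =>
        simp only [Nat.cast_zero, pow_zero, mul_one, zero_sub, hηneg]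
        rw [hBdef]; exact le_max_left _ _
    | succ n =>
        rw [show ((n+1:ℕ):ℤ)-1 = (n:ℤ) by push_cast; ring, hηnat]
        have h1 : η0/q ≤ B := hBdef ▸ le_max_right _ _
        have h2 : η0 ≤ B*q := by rw [div_le_iff₀ hq0] at h1; exact h1
        have h3 : (0:ℝ) < q^n := pow_pos hq0 n
        rw [pow_succ]
        nlinarith
  have hrq : (1:ℝ) < q^(-s) :=
    Real.one_lt_rpow_of_pos_of_lt_one_of_neg hq0 hq1 (by linarith)
  have hcost_term : ∀ k : ℕ, η (k:ℤ)^(-s) + η ((k:ℤ)-1)^(-s) ≤ C1 * (q^(-s))^k := by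
    intro k
    cases k with
    | zero =>
        have e0 : η ((0:ℕ):ℤ) = η0 := by rw [hηnat 0]; ring
        simp only [Nat.cast_zero] at e0
        simp only [Nat.cast_zero, pow_zero, mul_one, zero_sub, hηneg, e0]
        rw [hC1def]; linarith
    | succ n =>
        have e1 : η ((n+1:ℕ):ℤ) = q^(n+1)*η0 := hηnat (n+1)
        have e2 : ((n+1:ℕ):ℤ)-1 = (n:ℤ) := by push_cast; ring
        rw [e1, e2, hηnat n]
        rw [Real.mul_rpow (by positivity) hη0.le, Real.mul_rpow (by positivity) hη0.le]
        rw [rpow_pow_comm q hq0.le (-s) (n+1), rpow_pow_comm q hq0.le (-s) n]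
        have h4 : (0:ℝ) < (q^(-s))^n := pow_pos (by linarith) n
        have h5 : (q^(-s))^(n+1) = (q^(-s))^n * q^(-s) := pow_succ _ _
        rw [hC1def, h5]
        nlinarith [mul_pos h4 hη0s, mul_pos h4 hηms,
          mul_pos (mul_pos h4 hηms) (by linarith : (0:ℝ) < q^(-s) - 1)]
  -- choice of K
  obtain ⟨x, hxdef⟩ : ∃ x : ℝ, x = ε/(2*CX*η0) := ⟨_, rfl⟩
  have hx0 : 0 < x := by rw [hxdef]; positivity
  have hlogq : Real.log q < 0 := Real.log_neg hq0 hq1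
  obtain ⟨K, hKdef⟩ : ∃ K : ℕ, K = ⌈Real.log x / Real.log q⌉₊ := ⟨_, rfl⟩
  have hqK : q^K ≤ x := by
    have h1 : Real.log x / Real.log q ≤ (K:ℝ) := hKdef ▸ Nat.le_ceil _
    have h2 : (K:ℝ) * Real.log q ≤ Real.log x := (div_le_iff_of_neg hlogq).mp h1
    have h3 : Real.log (q^K) ≤ Real.log x := by
      rw [Real.log_pow]; exact_mod_cast h2
    exact (Real.log_le_log_iff (pow_pos hq0 K) hx0).mp h3
  obtain ⟨A, hAdef⟩ : ∃ A : ℝ, A = 1+2*CX*η0/q := ⟨_, rfl⟩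
  have hA1 : (1:ℝ) ≤ A := by
    have h : (0:ℝ) < 2*CX*η0/q := by positivity
    rw [hAdef]
    linarith
  have hA0 : (0:ℝ) < A := by linarith
  have hqKlow : ε/A ≤ q^K := by
    rcases Nat.eq_zero_or_pos K with hK0 | hK1
    · rw [hK0, pow_zero]
      calc ε/A ≤ ε/1 := by apply div_le_div_of_nonneg_left hε0.le one_pos hA1
        _ = ε := div_one ε
        _ ≤ 1 := hε1.le
    · have hy : 0 < Real.log x / Real.log q := by
        by_contra hc
        push_neg at hc
        have : K = 0 := by rw [hKdef]; exact Nat.ceil_eq_zero.mpr hc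
        omega
      have h1 : (K:ℝ) < Real.log x / Real.log q + 1 := by
        rw [hKdef]; exact_mod_cast Nat.ceil_lt_add_one hy.le
      have h2 : Real.log x + Real.log q < (K:ℝ) * Real.log q := by
        have h2' := mul_lt_mul_of_neg_right h1 hlogq
        have hy2 : Real.log x / Real.log q * Real.log q = Real.log x :=
          div_mul_cancel₀ _ hlogq.ne
        nlinarith
      have h3 : x*q < q^K := by
        have h4 : Real.log (x*q) < Real.log (q^K) := by
          rw [Real.log_mul hx0.ne' hq0.ne', Real.log_pow]
          exact_mod_cast h2
        exact (Real.log_lt_log_iff (by positivity) (pow_pos hq0 K)).mp h4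
      have h5 : ε/A ≤ x*q := by
        rw [div_le_iff₀ hA0]
        have hqA : q*A = q + 2*CX*η0 := by rw [hAdef]; field_simp
        have hAq : 2*CX*η0 ≤ q*A := by linarith
        have h8 : ε = x*(2*CX*η0) := by rw [hxdef]; field_simp
        have h9 : x*(2*CX*η0) ≤ x*(q*A) := mul_le_mul_of_nonneg_left hAq hx0.le
        have h10 : x*(q*A) = x*q*A := by ring
        linarith
      linarith
  -- the K-count bound
  obtain ⟨c, hcdef⟩ : ∃ c : ℝ, c = |Real.log (2*CX*η0)| := ⟨_, rfl⟩
  obtain ⟨L0, hL0def⟩ : ∃ L0 : ℝ, L0 = -Real.log q := ⟨_, rfl⟩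
  have hL0 : 0 < L0 := hL0def ▸ neg_pos.mpr hlogq
  have hc0 : 0 ≤ c := hcdef ▸ abs_nonneg _
  have hKcount : ((K:ℝ)+1) ≤ (2 + (1+c)/L0)*(1+|Real.log ε|) := by
    have hy3 : (K:ℝ) ≤ |Real.log x / Real.log q| + 1 := by
      rcases le_or_gt (Real.log x / Real.log q) 0 with h | h
      · have hK0 : K = 0 := by rw [hKdef]; exact Nat.ceil_eq_zero.mpr h
        rw [hK0]
        have := abs_nonneg (Real.log x / Real.log q)
        norm_num; linarith
      · have h1 : (K:ℝ) < Real.log x / Real.log q + 1 := by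
          rw [hKdef]; exact_mod_cast Nat.ceil_lt_add_one h.le
        have h2 := le_abs_self (Real.log x / Real.log q)
        linarith
    have habsy : |Real.log x / Real.log q| = |Real.log x| / L0 := by
      rw [abs_div, hL0def, abs_of_neg hlogq]
    have habsx : |Real.log x| ≤ |Real.log ε| + c := by
      rw [hxdef, Real.log_div hε0.ne' (by positivity), hcdef, sub_eq_add_neg]
      calc |Real.log ε + -Real.log (2*CX*η0)|
          ≤ |Real.log ε| + |-Real.log (2*CX*η0)| := abs_add_le _ _
        _ = |Real.log ε| + |Real.log (2*CX*η0)| := by rw [abs_neg]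
    have h8 : |Real.log x|/L0 ≤ (|Real.log ε| + c)/L0 :=
      div_le_div_of_nonneg_right habsx hL0.le
    have h9 : (K:ℝ)+1 ≤ (|Real.log ε| + c)/L0 + 2 := by
      rw [habsy] at hy3; linarith
    have hlε : 0 ≤ |Real.log ε| := abs_nonneg _
    have hinv : 0 < L0⁻¹ := inv_pos.mpr hL0
    rw [div_eq_mul_inv] at h9 ⊢
    have k0 : 0 ≤ c*|Real.log ε| := mul_nonneg hc0 hlε
    have k1 : (1+c)*(1+|Real.log ε|) = 1 + c + |Real.log ε| + c*|Real.log ε| := by ring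
    have k2 : (|Real.log ε|+c)*L0⁻¹ ≤ (1+c)*(1+|Real.log ε|)*L0⁻¹ :=
      mul_le_mul_of_nonneg_right (by linarith) hinv.le
    have k3 : (2+(1+c)*L0⁻¹)*(1+|Real.log ε|) =
        2 + 2*|Real.log ε| + (1+c)*(1+|Real.log ε|)*L0⁻¹ := by ring
    linarith
  clear hKdef
  -- the number of collocation points per level
  obtain ⟨T, hTdef⟩ : ∃ T : ℝ, T = ∑ k ∈ range (K+1), (q^α)^k := ⟨_, rfl⟩
  have hqα : 0 < q^α := Real.rpow_pos_of_pos hq0 _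
  have hT1 : (1:ℝ) ≤ T := by
    have h := Finset.single_le_sum (f := fun k => (q^α)^k)
      (fun i _ => (pow_pos hqα i).le) (Finset.mem_range.mpr (Nat.succ_pos K))
    rw [hTdef]
    simpa using h
  have hT0 : (0:ℝ) < T := by linarith
  obtain ⟨X, hXdef⟩ : ∃ X : ℝ, X = 2*CI*B*T/ε := ⟨_, rfl⟩
  have hX0 : 0 < X := by
    rw [hXdef]
    exact div_pos (mul_pos (mul_pos (mul_pos two_pos hCI) hB0) hT0) hε0
  obtain ⟨L, hLdef⟩ : ∃ L : ℝ, L = X^(1/μ) := ⟨_, rfl⟩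
  have hL0' : 0 < L := hLdef ▸ Real.rpow_pos_of_pos hX0 _
  have hqt : 0 < q^t := Real.rpow_pos_of_pos hq0 _
  obtain ⟨Mf, hMfdef⟩ : ∃ Mf : ℕ → ℕ, Mf = fun k => ⌈L * (q^t)^k⌉₊ := ⟨_, rfl⟩
  have hMfpos : ∀ k, 0 < Mf k := fun k => by
    rw [hMfdef]; exact Nat.ceil_pos.mpr (mul_pos hL0' (pow_pos hqt k))
  have hMfge : ∀ k, L*(q^t)^k ≤ (Mf k : ℝ) := fun k => by
    rw [hMfdef]; exact Nat.le_ceil _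
  have hMfle : ∀ k, (Mf k:ℝ) ≤ L*(q^t)^k + 1 := fun k => by
    rw [hMfdef]; exact (Nat.ceil_lt_add_one (mul_pos hL0' (pow_pos hqt k)).le).le
  have hLμ : L^(-μ) = ε/(2*CI*B*T) := by
    have h1 : L^(-μ) = X^((1/μ)*(-μ)) := by
      rw [hLdef]; exact (Real.rpow_mul hX0.le _ _).symm
    have h2 : (1/μ)*(-μ) = -1 := by field_simp
    rw [h1, h2, Real.rpow_neg_one, hXdef, inv_div]
  have hαeq : t*(-μ) + 1 = α := by rw [hαdef, htdef]; field_simp; ring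
  have key : ∀ k : ℕ, CI * ((Mf k:ℝ))^(-μ) * η ((k:ℤ)-1) ≤ ε/(2*T) * (q^α)^k := by
    intro k
    have hm : ((Mf k:ℝ))^(-μ) ≤ (L*(q^t)^k)^(-μ) :=
      Real.rpow_le_rpow_of_nonpos (mul_pos hL0' (pow_pos hqt k)) (hMfge k) (by linarith)
    have hsplit : (L*(q^t)^k)^(-μ) = L^(-μ) * ((q^t)^k)^(-μ) :=
      Real.mul_rpow hL0'.le (pow_pos hqt k).le
    have hq1' : ((q^t)^k)^(-μ) = (q^(t*(-μ)))^k := by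
      rw [rpow_pow_comm (q^t) hqt.le (-μ) k, ← Real.rpow_mul hq0.le]
    have hcoef : CI * (ε/(2*CI*B*T)) * B = ε/(2*T) := by field_simp
    have hqmerge : q^(t*(-μ)) * q = q^α := by
      nth_rewrite 2 [← Real.rpow_one q]
      rw [← Real.rpow_add hq0, hαeq]
    calc CI * ((Mf k:ℝ))^(-μ) * η ((k:ℤ)-1)
        ≤ CI * ((L*(q^t)^k)^(-μ)) * (B*q^k) := by
          apply mul_le_mul (mul_le_mul_of_nonneg_left hm hCI.le) (hbB k) (hbpos k).le
          exact mul_nonneg hCI.le (Real.rpow_nonneg (mul_pos hL0' (pow_pos hqt k)).le _)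
      _ = CI * L^(-μ) * B * ((q^(t*(-μ)))^k * q^k) := by rw [hsplit, hq1']; ring
      _ = CI * (ε/(2*CI*B*T)) * B * (q^(t*(-μ)) * q)^k := by rw [hLμ, mul_pow]
      _ = ε/(2*T) * (q^α)^k := by rw [hcoef, hqmerge]
  refine ⟨K, fun j => Mf (K-j), fun k _ => hMfpos _, ?_, ?_, hAdef ▸ hqKlow, ?_⟩
  · -- accuracy
    have hsub : ∀ k ∈ range (K+1), e k (Mf (K-(K-k))) = e k (Mf k) := by
      intro k hk
      rw [Nat.sub_sub_self (Nat.lt_succ_iff.mp (mem_range.mp hk))]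
    rw [Finset.sum_congr rfl hsub]
    have hid : ψ - ∑ k ∈ range (K+1), e k (Mf k) =
        (ψ - ψk K) + ∑ k ∈ range (K+1),
          ((ψk k - if k = 0 then 0 else ψk (k-1)) - e k (Mf k)) := by
      rw [Finset.sum_sub_distrib, tele_sum ψk K]; ring
    rw [hid]
    refine (abs_add_le _ _).trans ?_
    have h1 : |ψ - ψk K| ≤ ε/2 := by
      refine (hψ K).trans ?_
      rw [hηnat K]
      have h2 : q^K*η0 ≤ x*η0 := mul_le_mul_of_nonneg_right hqK hη0.le
      have h3 : CX*(x*η0) = ε/2 := by rw [hxdef]; field_simp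
      have h4 := mul_le_mul_of_nonneg_left h2 hCX.le
      linarith
    have h2 : |∑ k ∈ range (K+1),
        ((ψk k - if k = 0 then 0 else ψk (k-1)) - e k (Mf k))| ≤ ε/2 := by
      refine (Finset.abs_sum_le_sum_abs _ _).trans ?_
      have hterm : ∀ k ∈ range (K+1),
          |(ψk k - if k = 0 then 0 else ψk (k-1)) - e k (Mf k)| ≤ ε/(2*T) * (q^α)^k :=
        fun k _ => (he k (Mf k) (hMfpos k)).trans (key k)
      refine (Finset.sum_le_sum hterm).trans ?_
      rw [← Finset.mul_sum, ← hTdef]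
      rw [show ε/(2*T)*T = ε/2 by field_simp]
    linarith
  · -- cost
    have hsub : ∀ k ∈ range (K+1),
        ((Mf (K-(K-k)):ℝ)) * (η (k:ℤ)^(-s) + η ((k:ℤ)-1)^(-s)) =
        ((Mf k:ℝ)) * (η (k:ℤ)^(-s) + η ((k:ℤ)-1)^(-s)) := by
      intro k hk
      rw [Nat.sub_sub_self (Nat.lt_succ_iff.mp (mem_range.mp hk))]
    rw [Finset.sum_congr rfl hsub, ← hαdef, ← hBdef, ← hC1def, ← hAdef, ← hTdef]
    have hts : q^t * q^(-s) = q^α := by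
      rw [← Real.rpow_add hq0]
      congr 1
      rw [hαdef, htdef]; field_simp; ring
    have hterm : ∀ k ∈ range (K+1),
        ((Mf k:ℝ)) * (η (k:ℤ)^(-s) + η ((k:ℤ)-1)^(-s)) ≤
          C1*L*(q^α)^k + C1*(q^(-s))^k := by
      intro k _
      have hc0' : 0 ≤ η (k:ℤ)^(-s) + η ((k:ℤ)-1)^(-s) :=
        add_nonneg (Real.rpow_nonneg (hηpos k).le _) (Real.rpow_nonneg (hbpos k).le _)
      have h1 : ((Mf k:ℝ)) * (η (k:ℤ)^(-s) + η ((k:ℤ)-1)^(-s)) ≤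
          (L*(q^t)^k + 1) * (C1*(q^(-s))^k) := by
        apply mul_le_mul (hMfle k) (hcost_term k) hc0'
        have := mul_pos hL0' (pow_pos hqt k)
        linarith
      have h2 : (L*(q^t)^k + 1) * (C1*(q^(-s))^k) = C1*L*(q^α)^k + C1*(q^(-s))^k := by
        rw [← hts, mul_pow]; ring
      linarith
    refine (Finset.sum_le_sum hterm).trans ?_
    rw [Finset.sum_add_distrib, ← Finset.mul_sum, ← Finset.mul_sum, ← hTdef]
    have hLsplit : C1*L*T = C1 * (2*CI*B)^(1/μ) * ε^(-(1/μ)) * T^(1+1/μ) := by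
      have h1 : X = (2*CI*B)*(T*ε⁻¹) := by rw [hXdef, div_eq_mul_inv]; ring
      have h2 : L = (2*CI*B)^(1/μ) * T^(1/μ) * (ε^(1/μ))⁻¹ := by
        rw [hLdef, h1, Real.mul_rpow (mul_nonneg (mul_nonneg two_pos.le hCI.le) hB0.le)
            (mul_nonneg hT0.le (inv_nonneg.mpr hε0.le)),
          Real.mul_rpow hT0.le (inv_nonneg.mpr hε0.le), Real.inv_rpow hε0.le]
        ring
      have h3 : ε^(-(1/μ)) = (ε^(1/μ))⁻¹ := Real.rpow_neg hε0.le _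
      have h4 : T^(1/μ) * T = T^(1+1/μ) := by
        rw [Real.rpow_add hT0, Real.rpow_one]; ring
      rw [h2, h3, ← h4]; ring
    have hrK : (q^(-s))^K ≤ A^s * ε^(-s) := by
      have h1 : (q^(-s))^K = ((q^K:ℝ))^(-s) := (rpow_pow_comm q hq0.le (-s) K).symm
      have h2 : ((q^K:ℝ))^(-s) ≤ (ε/A)^(-s) :=
        Real.rpow_le_rpow_of_nonpos (div_pos hε0 hA0) hqKlow (by linarith)
      have h3 : (ε/A)^(-s) = A^s * ε^(-s) := by
        rw [Real.div_rpow hε0.le hA0.le, Real.rpow_neg hA0.le, div_eq_mul_inv, inv_inv]; ring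
      rw [h1]; rw [h3] at h2; exact h2
    have hG : ∑ k ∈ range (K+1), (q^(-s))^k ≤ q^(-s)*((q^(-s))^K)/(q^(-s)-1) :=
      geom_bound_gt _ hrq K
    have hrpos : (0:ℝ) < q^(-s) - 1 := by linarith
    have hG2 : C1 * ∑ k ∈ range (K+1), (q^(-s))^k ≤
        C1 * A^s * q^(-s)/(q^(-s)-1) * ε^(-s) := by
      have h5 : q^(-s)*((q^(-s))^K) ≤ q^(-s)*(A^s*ε^(-s)) :=
        mul_le_mul_of_nonneg_left hrK (by linarith : (0:ℝ) ≤ q^(-s))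
      have h6 : q^(-s)*((q^(-s))^K)/(q^(-s)-1) ≤ q^(-s)*(A^s*ε^(-s))/(q^(-s)-1) :=
        div_le_div_of_nonneg_right h5 hrpos.le
      have h7 : C1 * (q^(-s)*(A^s*ε^(-s))/(q^(-s)-1)) =
          C1 * A^s * q^(-s)/(q^(-s)-1) * ε^(-s) := by ring
      calc C1 * ∑ k ∈ range (K+1), (q^(-s))^k
          ≤ C1 * (q^(-s)*(A^s*ε^(-s))/(q^(-s)-1)) := by
            apply mul_le_mul_of_nonneg_left (hG.trans h6) hC10.le
        _ = C1 * A^s * q^(-s)/(q^(-s)-1) * ε^(-s) := h7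
    linarith [hLsplit, hG2]
  · rw [← hcdef, ← hL0def]
    exact hKcount
/-- Proposition on functionals (abstract form): ε-accuracy and ε-cost of the
adaptive multilevel stochastic collocation approximation of a quantity of
interest, in all three regimes of `s* μ*`. -/
theorem multilevel_functional_cost
    (q η0 ηm s μ CX CI : ℝ)
    (hq0 : 0 < q) (hq1 : q < 1) (hη0 : 0 < η0) (hηm : 0 < ηm)
    (hs : 0 < s) (hμ : 0 < μ) (hCX : 0 < CX) (hCI : 0 < CI)
    (η : ℤ → ℝ)
    (hηneg : η (-1) = ηm)
    (hηnat : ∀ k : ℕ, η (k : ℤ) = q ^ k * η0)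
    (ψ : ℝ) (ψk : ℕ → ℝ)
    (hψ : ∀ k : ℕ, |ψ - ψk k| ≤ CX * η (k : ℤ))
    (e : ℕ → ℕ → ℝ)
    (he : ∀ k : ℕ, ∀ M : ℕ, 0 < M →
      |(ψk k - if k = 0 then 0 else ψk (k - 1)) - e k M| ≤
        CI * (M : ℝ) ^ (-μ) * η ((k : ℤ) - 1)) :
    ∃ C : ℝ, 0 < C ∧ ∀ ε : ℝ, 0 < ε → ε < 1 →
      ∃ (K : ℕ) (M : ℕ → ℕ), (∀ k ≤ K, 0 < M k) ∧
        |ψ - ∑ k ∈ range (K + 1), e k (M (K - k))| ≤ ε ∧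
        ∑ k ∈ range (K + 1),
            (M (K - k) : ℝ) * (η (k : ℤ) ^ (-s) + η ((k : ℤ) - 1) ^ (-s)) ≤
          if s * μ < 1 then C * ε ^ (-(1 / μ))
          else if s * μ = 1 then
            C * ε ^ (-(1 / μ)) * (1 + |Real.log ε|) ^ (1 + 1 / μ)
          else C * ε ^ (-s) := by
  have aux := aux_construction q η0 ηm s μ CX CI hq0 hq1 hη0 hηm hs hμ hCX hCI
    η hηneg hηnat ψ ψk hψ e he
  have hμ1 : (0:ℝ) < 1 + μ := by linarith
  obtain ⟨α, hαdef⟩ : ∃ α : ℝ, α = (1-s*μ)/(1+μ) := ⟨_, rfl⟩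
  obtain ⟨B, hBdef⟩ : ∃ B : ℝ, B = max ηm (η0/q) := ⟨_, rfl⟩
  have hB0 : 0 < B := by rw [hBdef]; exact lt_max_iff.mpr (Or.inl hηm)
  obtain ⟨C1, hC1def⟩ : ∃ C1 : ℝ, C1 = 2*η0^(-s) + ηm^(-s) := ⟨_, rfl⟩
  have hη0s : (0:ℝ) < η0^(-s) := Real.rpow_pos_of_pos hη0 _
  have hηms : (0:ℝ) < ηm^(-s) := Real.rpow_pos_of_pos hηm _
  have hC10 : 0 < C1 := by rw [hC1def]; linarith
  obtain ⟨A, hAdef⟩ : ∃ A : ℝ, A = 1+2*CX*η0/q := ⟨_, rfl⟩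
  have hA0 : (0:ℝ) < A := by
    have h : (0:ℝ) < 2*CX*η0/q := by positivity
    rw [hAdef]; linarith
  obtain ⟨C4, hC4def⟩ : ∃ C4 : ℝ, C4 = 2 + (1+|Real.log (2*CX*η0)|)/(-Real.log q) := ⟨_, rfl⟩
  have hlogq : Real.log q < 0 := Real.log_neg hq0 hq1
  have hC40 : 0 < C4 := by
    have h1 : (0:ℝ) ≤ (1+|Real.log (2*CX*η0)|)/(-Real.log q) :=
      div_nonneg (by linarith [abs_nonneg (Real.log (2*CX*η0))]) (by linarith)
    rw [hC4def]; linarith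
  obtain ⟨P, hPdef⟩ : ∃ P : ℝ, P = C1 * (2*CI*B)^(1/μ) := ⟨_, rfl⟩
  have hP0 : 0 < P := by
    rw [hPdef]
    exact mul_pos hC10 (Real.rpow_pos_of_pos (mul_pos (mul_pos two_pos hCI) hB0) _)
  have hrq : (1:ℝ) < q^(-s) :=
    Real.one_lt_rpow_of_pos_of_lt_one_of_neg hq0 hq1 (by linarith)
  obtain ⟨Q, hQdef⟩ : ∃ Q : ℝ, Q = C1*A^s*q^(-s)/(q^(-s)-1) := ⟨_, rfl⟩
  have hQ0 : 0 < Q := by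
    rw [hQdef]
    exact div_pos (mul_pos (mul_pos hC10 (Real.rpow_pos_of_pos hA0 _))
      (Real.rpow_pos_of_pos hq0 _)) (by linarith)
  have hexp1 : (0:ℝ) ≤ 1 + 1/μ := by positivity
  rcases lt_trichotomy (s*μ) 1 with hc | hc | hc
  · -- subcritical regime
    have hα0 : 0 < α := by rw [hαdef]; exact div_pos (by linarith) hμ1
    have hρ0 : 0 < q^α := Real.rpow_pos_of_pos hq0 _
    have hρ1 : q^α < 1 := Real.rpow_lt_one hq0.le hq1 hα0
    refine ⟨P * (1/(1-q^α))^(1+1/μ) + Q, by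
      have := mul_pos hP0 (Real.rpow_pos_of_pos
        (show (0:ℝ) < 1/(1-q^α) from div_pos one_pos (by linarith)) (1+1/μ))
      linarith, ?_⟩
    intro ε hε0 hε1
    obtain ⟨K, M, hM, herr, hcost, hqlow, hKc⟩ := aux ε hε0 hε1
    rw [← hC1def, ← hBdef, ← hAdef, ← hαdef, ← hPdef, ← hQdef] at hcost
    refine ⟨K, M, hM, herr, ?_⟩
    rw [if_pos hc]
    have hTnn : (0:ℝ) ≤ ∑ k ∈ range (K+1), (q^α)^k :=
      Finset.sum_nonneg fun i _ => pow_nonneg hρ0.le i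
    have hTle : ∑ k ∈ range (K+1), (q^α)^k ≤ 1/(1-q^α) :=
      geom_bound_lt _ hρ0.le hρ1 _
    have h2 : (∑ k ∈ range (K+1), (q^α)^k)^(1+1/μ) ≤ (1/(1-q^α))^(1+1/μ) :=
      Real.rpow_le_rpow hTnn hTle hexp1
    have h3 := mul_le_mul_of_nonneg_left h2
      (mul_nonneg hP0.le (Real.rpow_nonneg hε0.le (-(1/μ))))
    have h4 : ε^(-s) ≤ ε^(-(1/μ)) := by
      apply Real.rpow_le_rpow_of_exponent_ge hε0 hε1.le
      have hs1 : s < 1/μ := (lt_div_iff₀ hμ).mpr (by linarith)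
      linarith
    have h5 := mul_le_mul_of_nonneg_left h4 hQ0.le
    calc ∑ k ∈ range (K+1), (M (K-k) : ℝ) * (η (k:ℤ)^(-s) + η ((k:ℤ)-1)^(-s))
        ≤ P * ε^(-(1/μ)) * (∑ k ∈ range (K+1), (q^α)^k)^(1+1/μ) + Q*ε^(-s) := hcost
      _ ≤ P * ε^(-(1/μ)) * (1/(1-q^α))^(1+1/μ) + Q*ε^(-(1/μ)) := by linarith
      _ = (P * (1/(1-q^α))^(1+1/μ) + Q) * ε^(-(1/μ)) := by ring
  · -- critical regime
    have hα0 : α = 0 := by rw [hαdef, hc]; simp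
    have hs' : s = 1/μ := by rw [eq_div_iff hμ.ne']; exact hc
    refine ⟨P * C4^(1+1/μ) + Q, by
      have := mul_pos hP0 (Real.rpow_pos_of_pos hC40 (1+1/μ))
      linarith, ?_⟩
    intro ε hε0 hε1
    obtain ⟨K, M, hM, herr, hcost, hqlow, hKc⟩ := aux ε hε0 hε1
    rw [← hC1def, ← hBdef, ← hAdef, ← hαdef, ← hPdef, ← hQdef] at hcost
    rw [← hC4def] at hKc
    refine ⟨K, M, hM, herr, ?_⟩
    rw [if_neg (by rw [hc]; exact lt_irrefl 1), if_pos hc]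
    have hTT : ∑ k ∈ range (K+1), (q^α)^k = (K:ℝ)+1 := by
      rw [hα0, Real.rpow_zero]
      simp
    have hE0 : (0:ℝ) ≤ 1 + |Real.log ε| := by linarith [abs_nonneg (Real.log ε)]
    have hE1 : (1:ℝ) ≤ (1 + |Real.log ε|)^(1+1/μ) :=
      Real.one_le_rpow (by linarith [abs_nonneg (Real.log ε)]) hexp1
    have h2 : (∑ k ∈ range (K+1), (q^α)^k)^(1+1/μ) ≤ C4^(1+1/μ) * (1+|Real.log ε|)^(1+1/μ) := by
      rw [hTT, ← Real.mul_rpow hC40.le hE0]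
      exact Real.rpow_le_rpow (by positivity) hKc hexp1
    have h3 := mul_le_mul_of_nonneg_left h2
      (mul_nonneg hP0.le (Real.rpow_nonneg hε0.le (-(1/μ))))
    have hεpos : (0:ℝ) < ε^(-(1/μ)) := Real.rpow_pos_of_pos hε0 _
    have h5 : Q * ε^(-(1/μ)) ≤ Q * ε^(-(1/μ)) * (1+|Real.log ε|)^(1+1/μ) := by
      nth_rewrite 1 [← mul_one (Q * ε^(-(1/μ)))]
      exact mul_le_mul_of_nonneg_left hE1 (mul_nonneg hQ0.le hεpos.le)
    rw [show ε^(-s) = ε^(-(1/μ)) by rw [hs']] at hcost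
    calc ∑ k ∈ range (K+1), (M (K-k) : ℝ) * (η (k:ℤ)^(-s) + η ((k:ℤ)-1)^(-s))
        ≤ P * ε^(-(1/μ)) * (∑ k ∈ range (K+1), (q^α)^k)^(1+1/μ) + Q*ε^(-(1/μ)) := hcost
      _ ≤ P * ε^(-(1/μ)) * (C4^(1+1/μ) * (1+|Real.log ε|)^(1+1/μ))
            + Q * ε^(-(1/μ)) * (1+|Real.log ε|)^(1+1/μ) := by linarith
      _ = (P * C4^(1+1/μ) + Q) * ε^(-(1/μ)) * (1+|Real.log ε|)^(1+1/μ) := by ring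
  · -- supercritical regime
    have hα0 : α < 0 := by rw [hαdef]; exact div_neg_of_neg_of_pos (by linarith) hμ1
    have hρ0 : 0 < q^α := Real.rpow_pos_of_pos hq0 _
    have hρ : 1 < q^α := Real.one_lt_rpow_of_pos_of_lt_one_of_neg hq0 hq1 hα0
    obtain ⟨R, hRdef⟩ : ∃ R : ℝ, R = q^α*A^(-α)/(q^α-1) := ⟨_, rfl⟩
    have hR0 : 0 < R := by
      rw [hRdef]
      exact div_pos (mul_pos hρ0 (Real.rpow_pos_of_pos hA0 _)) (by linarith)
    have hexp : -(1/μ)+α*(1+1/μ) = -s := by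
      rw [hαdef]
      field_simp
      ring
    refine ⟨P * R^(1+1/μ) + Q, by
      have := mul_pos hP0 (Real.rpow_pos_of_pos hR0 (1+1/μ))
      linarith, ?_⟩
    intro ε hε0 hε1
    obtain ⟨K, M, hM, herr, hcost, hqlow, hKc⟩ := aux ε hε0 hε1
    rw [← hC1def, ← hBdef, ← hAdef, ← hαdef, ← hPdef, ← hQdef] at hcost
    rw [← hAdef] at hqlow
    refine ⟨K, M, hM, herr, ?_⟩
    rw [if_neg (by push_neg; linarith), if_neg (by linarith)]
    have hTnn : (0:ℝ) ≤ ∑ k ∈ range (K+1), (q^α)^k :=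
      Finset.sum_nonneg fun i _ => pow_nonneg hρ0.le i
    have g2 : (q^α)^K ≤ ε^α * A^(-α) := by
      have g2a : (q^α)^K = ((q^K:ℝ))^α := (rpow_pow_comm q hq0.le α K).symm
      have g2b : ((q^K:ℝ))^α ≤ (ε/A)^α :=
        Real.rpow_le_rpow_of_nonpos (div_pos hε0 hA0) hqlow hα0.le
      have g2c : (ε/A)^α = ε^α * A^(-α) := by
        rw [Real.div_rpow hε0.le hA0.le, div_eq_mul_inv, ← Real.rpow_neg hA0.le]
      rw [g2a]; rw [g2c] at g2b; exact g2b
    have t2 : ∑ k ∈ range (K+1), (q^α)^k ≤ R * ε^α := by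
      have g1 := geom_bound_gt (q^α) hρ K
      have g3 : q^α*((q^α)^K) ≤ q^α*(ε^α*A^(-α)) := mul_le_mul_of_nonneg_left g2 hρ0.le
      have g4 := div_le_div_of_nonneg_right g3 (by linarith : (0:ℝ) ≤ q^α-1)
      have g5 : q^α*(ε^α*A^(-α))/(q^α-1) = R*ε^α := by rw [hRdef]; ring
      calc ∑ k ∈ range (K+1), (q^α)^k ≤ q^α*((q^α)^K)/(q^α-1) := g1
        _ ≤ q^α*(ε^α*A^(-α))/(q^α-1) := g4
        _ = R*ε^α := g5
    have t3 : (∑ k ∈ range (K+1), (q^α)^k)^(1+1/μ) ≤ R^(1+1/μ) * ε^(α*(1+1/μ)) := by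
      have t3a : (∑ k ∈ range (K+1), (q^α)^k)^(1+1/μ) ≤ (R*ε^α)^(1+1/μ) :=
        Real.rpow_le_rpow hTnn t2 hexp1
      have t3b : (R*ε^α)^(1+1/μ) = R^(1+1/μ)*(ε^α)^(1+1/μ) :=
        Real.mul_rpow hR0.le (Real.rpow_nonneg hε0.le _)
      have t3c : (ε^α)^(1+1/μ) = ε^(α*(1+1/μ)) := (Real.rpow_mul hε0.le _ _).symm
      rw [t3b, t3c] at t3a
      exact t3a
    have h3 := mul_le_mul_of_nonneg_left t3
      (mul_nonneg hP0.le (Real.rpow_nonneg hε0.le (-(1/μ))))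
    calc ∑ k ∈ range (K+1), (M (K-k) : ℝ) * (η (k:ℤ)^(-s) + η ((k:ℤ)-1)^(-s))
        ≤ P * ε^(-(1/μ)) * (∑ k ∈ range (K+1), (q^α)^k)^(1+1/μ) + Q*ε^(-s) := hcost
      _ ≤ P * ε^(-(1/μ)) * (R^(1+1/μ) * ε^(α*(1+1/μ))) + Q*ε^(-s) := by linarith
      _ = P * R^(1+1/μ) * (ε^(-(1/μ)) * ε^(α*(1+1/μ))) + Q*ε^(-s) := by ring
      _ = P * R^(1+1/μ) * ε^(-s) + Q*ε^(-s) := by rw [← Real.rpow_add hε0, hexp]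
      _ = (P * R^(1+1/μ) + Q) * ε^(-s) := by ring
end
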